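/- arXiv:1704.07042 — 4 statements merged into one kernel-verified Lean document; each statement's English description precedes it below -/
import Mathlib

section
/- Let Ω ⊂ ℂⁿ be a C²-smooth bounded pseudoconvex domain, z₀ ∈ bΩ a strongly pseudoconvex boundary point, and Ω_r^p the inflated domain {(z,w): ρ(z) + |w₁|^{2p/r} + ⋯ + |w_p|^{2p/r} < 0} with 0 < r ≤ p. Then there exists s > 0 such that every boundary point (z,w) ∈ bΩ_r^p with |z − z₀| < s and w_k ≠ 0 for all 1 ≤ k ≤ p is a strongly pseudoconvex boundary point of Ω_r^p. -/
/-- Directional Wirtinger derivative `∂f(z)(v) = (1/2)(D_v f - i D_{iv} f)`. -/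
noncomputable def wirt {E : Type*} [NormedAddCommGroup E] [NormedSpace ℂ E]
    (f : E → ℂ) (v z : E) : ℂ :=
  (1 / 2) * (fderiv ℝ f z v - Complex.I * fderiv ℝ f z (Complex.I • v))

/-- Directional conjugate Wirtinger derivative. -/
noncomputable def wirtBar {E : Type*} [NormedAddCommGroup E] [NormedSpace ℂ E]
    (f : E → ℂ) (v z : E) : ℂ :=
  (1 / 2) * (fderiv ℝ f z v + Complex.I * fderiv ℝ f z (Complex.I • v))

/-- The complex Hessian (Levi form) of a real function `φ` at `P` in direction `X`. -/
noncomputable def cHessian {E : Type*} [NormedAddCommGroup E] [NormedSpace ℂ E]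
    (φ : E → ℝ) (P X : E) : ℂ :=
  wirt (fun z => wirtBar (fun y => (φ y : ℂ)) X z) X P

/-- A boundary point `P` of `{φ < 0}` is strongly pseudoconvex if the Levi form of `φ`
at `P` is positive on all nonzero complex tangent vectors. -/
def StronglyPscAt {E : Type*} [NormedAddCommGroup E] [NormedSpace ℂ E]
    (φ : E → ℝ) (P : E) : Prop :=
  P ∈ frontier {z | φ z < 0} ∧
    ∀ X : E, X ≠ 0 → wirt (fun y => (φ y : ℂ)) X P = 0 → 0 < (cHessian φ P X).re

/-- Levi pseudoconvexity of the domain `{φ < 0}`. -/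
def LeviPseudoconvex {E : Type*} [NormedAddCommGroup E] [NormedSpace ℂ E]
    (φ : E → ℝ) : Prop :=
  ∀ P ∈ frontier {z | φ z < 0},
    ∀ X : E, wirt (fun y => (φ y : ℂ)) X P = 0 → 0 ≤ (cHessian φ P X).re

section general
variable {G G' : Type*} [NormedAddCommGroup G] [NormedSpace ℂ G]
  [NormedAddCommGroup G'] [NormedSpace ℂ G'] {φ ψ : G → ℝ} {z P X u v : G}

theorem fderiv_ofReal_comp (h : DifferentiableAt ℝ φ z) :
    fderiv ℝ (fun y => (φ y : ℂ)) z = Complex.ofRealCLM.comp (fderiv ℝ φ z) :=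
  (Complex.ofRealCLM.hasFDerivAt.comp z h.hasFDerivAt).fderiv

theorem wirt_real_eq (h : DifferentiableAt ℝ φ z) :
    wirt (fun y => (φ y : ℂ)) X z =
      (1 / 2) * ((fderiv ℝ φ z X : ℂ) - Complex.I * (fderiv ℝ φ z (Complex.I • X) : ℂ)) := by
  rw [wirt, fderiv_ofReal_comp h]; rfl

theorem wirtBar_real_eq (h : DifferentiableAt ℝ φ z) :
    wirtBar (fun y => (φ y : ℂ)) X z =
      (1 / 2) * ((fderiv ℝ φ z X : ℂ) + Complex.I * (fderiv ℝ φ z (Complex.I • X) : ℂ)) := by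
  rw [wirtBar, fderiv_ofReal_comp h]; rfl

/-- directional second derivative -/
noncomputable def D2 (φ : G → ℝ) (P u v : G) : ℝ :=
  fderiv ℝ (fun z => fderiv ℝ φ z v) P u

theorem hasFDerivAt_fderiv_apply (h : ContDiffAt ℝ 2 φ P) (v : G) :
    HasFDerivAt (fun z => fderiv ℝ φ z v)
      ((ContinuousLinearMap.apply ℝ ℝ v).comp (fderiv ℝ (fderiv ℝ φ) P)) P := by
  have h1 : DifferentiableAt ℝ (fderiv ℝ φ) P :=
    (h.fderiv_right (m := 1) (by norm_num)).differentiableAt (by norm_num)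
  exact (ContinuousLinearMap.apply ℝ ℝ v).hasFDerivAt.comp P h1.hasFDerivAt

theorem D2_eq_fderiv_fderiv (h : ContDiffAt ℝ 2 φ P) (u v : G) :
    D2 φ P u v = (fderiv ℝ (fderiv ℝ φ) P u) v := by
  rw [D2, (hasFDerivAt_fderiv_apply h v).fderiv]; rfl

theorem differentiableAt_fderiv_apply (h : ContDiffAt ℝ 2 φ P) (v : G) :
    DifferentiableAt ℝ (fun z => fderiv ℝ φ z v) P :=
  (hasFDerivAt_fderiv_apply h v).differentiableAt

theorem cHessian_re_eq (h : ContDiffAt ℝ 2 φ P) (X : G) :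
    (cHessian φ P X).re =
      (1 / 4) * (D2 φ P X X + D2 φ P (Complex.I • X) (Complex.I • X)) := by
  have hev : (fun z => wirtBar (fun y => (φ y : ℂ)) X z) =ᶠ[nhds P]
      (fun z => (1/2 : ℂ) * ((fderiv ℝ φ z X : ℂ)
        + Complex.I * (fderiv ℝ φ z (Complex.I • X) : ℂ))) := by
    filter_upwards [h.eventually (by simp)] with z hz
    exact wirtBar_real_eq (hz.differentiableAt (by norm_num))
  have hX := hasFDerivAt_fderiv_apply h X
  have hIX := hasFDerivAt_fderiv_apply h (Complex.I • X)
  have hG := (((Complex.ofRealCLM.hasFDerivAt.comp P hX).add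
      ((Complex.ofRealCLM.hasFDerivAt.comp P hIX).const_mul Complex.I)).const_mul (1/2 : ℂ))
  have hgder := hev.fderiv_eq.trans hG.fderiv
  rw [cHessian, wirt, hgder, D2_eq_fderiv_fderiv h, D2_eq_fderiv_fderiv h]
  simp only [ContinuousLinearMap.smulRight_apply, ContinuousLinearMap.coe_comp',
    Function.comp_apply, ContinuousLinearMap.apply_apply, ContinuousLinearMap.add_apply,
    ContinuousLinearMap.smul_apply, Complex.ofRealCLM_apply, smul_eq_mul]
  set a := (fderiv ℝ (fderiv ℝ φ) P X) X
  set b := (fderiv ℝ (fderiv ℝ φ) P X) (Complex.I • X)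
  set c := (fderiv ℝ (fderiv ℝ φ) P (Complex.I • X)) X
  set d := (fderiv ℝ (fderiv ℝ φ) P (Complex.I • X)) (Complex.I • X)
  simp [Complex.ext_iff]
  ring

theorem D2_add (hφ : ContDiffAt ℝ 2 φ P) (hψ : ContDiffAt ℝ 2 ψ P) (u v : G) :
    D2 (fun x => φ x + ψ x) P u v = D2 φ P u v + D2 ψ P u v := by
  have hev : (fun z => fderiv ℝ (fun x => φ x + ψ x) z v) =ᶠ[nhds P]
      (fun z => fderiv ℝ φ z v + fderiv ℝ ψ z v) := by
    filter_upwards [hφ.eventually (by simp), hψ.eventually (by simp)] with z h1 h2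
    rw [fderiv_fun_add (h1.differentiableAt (by norm_num)) (h2.differentiableAt (by norm_num))]
    rfl
  rw [D2, hev.fderiv_eq,
    ((differentiableAt_fderiv_apply hφ v).hasFDerivAt.fun_add
      (differentiableAt_fderiv_apply hψ v).hasFDerivAt).fderiv]
  rw [D2, D2, (hasFDerivAt_fderiv_apply hφ v).fderiv, (hasFDerivAt_fderiv_apply hψ v).fderiv]
  rfl

theorem D2_sum {ι : Type*} (s : Finset ι) (f : ι → G → ℝ)
    (hf : ∀ i ∈ s, ContDiffAt ℝ 2 (f i) P) (u v : G) :
    D2 (fun x => ∑ i ∈ s, f i x) P u v = ∑ i ∈ s, D2 (f i) P u v := by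
  classical
  induction s using Finset.induction with
  | empty =>
      simp only [Finset.sum_empty, D2]
      rw [show (fun z : G => fderiv ℝ (fun _ : G => (0:ℝ)) z v) = fun _ => 0 by
        funext z; rw [fderiv_fun_const]; rfl]
      rw [fderiv_fun_const]; rfl
  | @insert a s' hx ih =>
      simp only [Finset.sum_insert hx]
      rw [D2_add (hf a (Finset.mem_insert_self a s'))
        (ContDiffAt.sum fun i hi => hf i (Finset.mem_insert_of_mem hi)),
        ih fun i hi => hf i (Finset.mem_insert_of_mem hi)]

theorem D2_comp (L : G' →L[ℝ] G) {P : G'} (h : ContDiffAt ℝ 2 φ (L P)) (u v : G') :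
    D2 (fun x => φ (L x)) P u v = D2 φ (L P) (L u) (L v) := by
  have hLev : ∀ᶠ z in nhds P, ContDiffAt ℝ 2 φ (L z) :=
    (L.continuous.continuousAt (x := P)).eventually (h.eventually (by simp))
  have hev : (fun z => fderiv ℝ (fun x => φ (L x)) z v) =ᶠ[nhds P]
      (fun z => fderiv ℝ φ (L z) (L v)) := by
    filter_upwards [hLev] with z hz
    have : fderiv ℝ (fun x => φ (L x)) z = (fderiv ℝ φ (L z)).comp L := by
      rw [show (fun x => φ (L x)) = φ ∘ L from rfl,
        fderiv_comp z (hz.differentiableAt (by norm_num)) L.differentiableAt, L.fderiv]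
    rw [this]; rfl
  rw [D2, hev.fderiv_eq]
  rw [show (fun z => (fderiv ℝ φ (L z)) (L v)) = (fun y => fderiv ℝ φ y (L v)) ∘ L from rfl,
    (((hasFDerivAt_fderiv_apply h (L v)).comp P L.hasFDerivAt)).fderiv,
    D2_eq_fderiv_fderiv h]
  rfl
end general

section onevar

/-- real inner product on ℂ, doubled -/
def Bf (c v : ℂ) : ℝ := 2 * (c.re * v.re + c.im * v.im)

/-- `Bf c` as a continuous linear map -/
noncomputable def Bc (c : ℂ) : ℂ →L[ℝ] ℝ :=
  (2 * c.re) • Complex.reCLM + (2 * c.im) • Complex.imCLM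

@[simp] theorem Bc_apply (c v : ℂ) : Bc c v = Bf c v := by
  simp [Bc, Bf]; ring

theorem Bf_symm (c v : ℂ) : Bf c v = Bf v c := by simp [Bf]; ring

theorem hasFDerivAt_normSq (c : ℂ) : HasFDerivAt Complex.normSq (Bc c) c := by
  have h : HasFDerivAt (fun z : ℂ => z.re * z.re + z.im * z.im)
      ((c.re • Complex.reCLM + c.re • Complex.reCLM) +
        (c.im • Complex.imCLM + c.im • Complex.imCLM)) c := by
    exact ((Complex.reCLM.hasFDerivAt.mul Complex.reCLM.hasFDerivAt).add
      (Complex.imCLM.hasFDerivAt.mul Complex.imCLM.hasFDerivAt))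
  have he : (fun z : ℂ => z.re * z.re + z.im * z.im) = Complex.normSq := by
    funext z; rw [Complex.normSq_apply]
  rw [he] at h
  convert h using 1
  ext v <;> simp [Bc] <;> ring

theorem contDiff_normSq : ContDiff ℝ 2 Complex.normSq := by
  have he : (fun z : ℂ => z.re * z.re + z.im * z.im) = Complex.normSq := by
    funext z; rw [Complex.normSq_apply]
  rw [← he]
  exact (Complex.reCLM.contDiff.mul Complex.reCLM.contDiff).add
    (Complex.imCLM.contDiff.mul Complex.imCLM.contDiff)

variable {β : ℝ} {c : ℂ}

theorem contDiffAt_g (hc : c ≠ 0) : ContDiffAt ℝ 2 (fun c => Complex.normSq c ^ β) c :=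
  (Real.contDiffAt_rpow_const_of_ne (Complex.normSq_pos.mpr hc).ne').comp c
    contDiff_normSq.contDiffAt

theorem hasFDerivAt_g (hc : c ≠ 0) :
    HasFDerivAt (fun c => Complex.normSq c ^ β)
      ((β * Complex.normSq c ^ (β - 1)) • Bc c) c := by
  have h := (Real.hasDerivAt_rpow_const
    (p := β) (Or.inl (Complex.normSq_pos.mpr hc).ne')).comp_hasFDerivAt c
    (hasFDerivAt_normSq c)
  exact h

theorem fderiv_g_eq (hc : c ≠ 0) :
    fderiv ℝ (fun c => Complex.normSq c ^ β) c
      = (β * Complex.normSq c ^ (β - 1)) • Bc c :=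
  (hasFDerivAt_g hc).fderiv

theorem D2_g (hc : c ≠ 0) (u v : ℂ) :
    D2 (fun c => Complex.normSq c ^ β) c u v =
      β * ((β - 1) * Complex.normSq c ^ (β - 2) * Bf c u * Bf c v
        + Complex.normSq c ^ (β - 1) * Bf u v) := by
  have hev : (fun z => fderiv ℝ (fun c => Complex.normSq c ^ β) z v) =ᶠ[nhds c]
      (fun z => β * (Complex.normSq z ^ (β - 1) * Bf z v)) := by
    filter_upwards [isOpen_compl_singleton.eventually_mem hc] with z hz
    rw [fderiv_g_eq hz]
    simp; ring
  have hf1 : HasFDerivAt (fun z : ℂ => Complex.normSq z ^ (β - 1))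
      (((β - 1) * Complex.normSq c ^ (β - 1 - 1)) • Bc c) c := hasFDerivAt_g hc
  have hf2 : HasFDerivAt (fun z : ℂ => Bf z v) (Bc v) c := by
    have : (fun z : ℂ => Bf z v) = fun z => Bc v z := by
      funext z; rw [Bc_apply, Bf_symm]
    rw [this]
    exact (Bc v).hasFDerivAt
  have hF := (hf1.fun_mul hf2).const_mul β
  rw [D2, hev.fderiv_eq, hF.fderiv]
  have h21 : β - 1 - 1 = β - 2 := by ring
  simp [h21, Bf_symm v c, Bf_symm v u]
  ring

theorem onevar_levi (hc : c ≠ 0) (hN : 0 < Complex.normSq c) (v : ℂ) :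
    (1 / 4 : ℝ) * (D2 (fun c => Complex.normSq c ^ β) c v v
      + D2 (fun c => Complex.normSq c ^ β) c (Complex.I • v) (Complex.I • v)) =
      β ^ 2 * Complex.normSq c ^ (β - 1) * Complex.normSq v := by
  rw [D2_g hc, D2_g hc]
  have key : Bf c v * Bf c v + Bf c (Complex.I • v) * Bf c (Complex.I • v)
      = 4 * Complex.normSq c * Complex.normSq v := by
    simp [Bf, Complex.normSq_apply, smul_eq_mul]
    ring
  have hvv : Bf v v = 2 * Complex.normSq v := by simp [Bf, Complex.normSq_apply]
  have hivv : Bf (Complex.I • v) (Complex.I • v) = 2 * Complex.normSq v := by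
    simp [Bf, Complex.normSq_apply, smul_eq_mul]; ring
  have hpow : Complex.normSq c ^ (β - 2) * Complex.normSq c
      = Complex.normSq c ^ (β - 1) := by
    rw [show β - 1 = β - 2 + 1 by ring, Real.rpow_add hN, Real.rpow_one]
  rw [hvv, hivv]
  linear_combination (β * (β - 1) * Complex.normSq c ^ (β - 2) / 4) * key + (β * (β - 1) * Complex.normSq v) * hpow

theorem onevar_wirt_arith (a : ℝ) (c v : ℂ) :
    (1 / 2 : ℂ) * (((a * Bf c v : ℝ) : ℂ) - Complex.I * ((a * Bf c (Complex.I • v) : ℝ) : ℂ))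
      = (a : ℂ) * ((starRingEnd ℂ) c * v) := by
  simp [Bf, Complex.ext_iff, smul_eq_mul, Complex.mul_re, Complex.mul_im]
  constructor <;> ring

end onevar

section forms
variable {G : Type*} [NormedAddCommGroup G] [NormedSpace ℂ G] (ρ : G → ℝ)

noncomputable def lform (z X : G) : ℂ :=
  (1 / 2) * ((fderiv ℝ ρ z X : ℂ) - Complex.I * (fderiv ℝ ρ z (Complex.I • X) : ℂ))

noncomputable def qform (z X : G) : ℝ :=
  (1 / 4) * ((fderiv ℝ (fderiv ℝ ρ) z X) X
    + (fderiv ℝ (fderiv ℝ ρ) z (Complex.I • X)) (Complex.I • X))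

variable {ρ} {z X : G}

theorem lform_eq_wirt (h : DifferentiableAt ℝ ρ z) :
    wirt (fun y => (ρ y : ℂ)) X z = lform ρ z X := wirt_real_eq h

theorem qform_eq (h : ContDiffAt ℝ 2 ρ z) : (cHessian ρ z X).re = qform ρ z X := by
  rw [cHessian_re_eq h, D2_eq_fderiv_fderiv h, D2_eq_fderiv_fderiv h, qform]

theorem continuous_lform (h : ContDiff ℝ 2 ρ) :
    Continuous fun p : G × G => lform ρ p.1 p.2 := by
  have hd : Continuous (fderiv ℝ ρ) := h.continuous_fderiv (by norm_num)
  have h1 : Continuous fun p : G × G => fderiv ℝ ρ p.1 p.2 :=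
    (hd.comp continuous_fst).clm_apply continuous_snd
  have h2 : Continuous fun p : G × G => fderiv ℝ ρ p.1 (Complex.I • p.2) :=
    (hd.comp continuous_fst).clm_apply (continuous_const.smul continuous_snd)
  unfold lform
  fun_prop (disch := assumption)

theorem continuous_qform (h : ContDiff ℝ 2 ρ) :
    Continuous fun p : G × G => qform ρ p.1 p.2 := by
  have hd : Continuous (fderiv ℝ (fderiv ℝ ρ)) :=
    (h.fderiv_right (m := 1) (by norm_num)).continuous_fderiv (by norm_num)
  have h1 : Continuous fun p : G × G => (fderiv ℝ (fderiv ℝ ρ) p.1 p.2) p.2 :=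
    ((hd.comp continuous_fst).clm_apply continuous_snd).clm_apply continuous_snd
  have h2 : Continuous fun p : G × G =>
      (fderiv ℝ (fderiv ℝ ρ) p.1 (Complex.I • p.2)) (Complex.I • p.2) :=
    ((hd.comp continuous_fst).clm_apply (continuous_const.smul continuous_snd)).clm_apply
      (continuous_const.smul continuous_snd)
  unfold qform
  fun_prop (disch := assumption)

theorem lform_smul (t : ℝ) : lform ρ z (t • X) = (t : ℂ) * lform ρ z X := by
  rw [lform, lform, smul_comm Complex.I t]
  simp only [map_smul, smul_eq_mul]
  push_cast
  ring

theorem qform_smul (t : ℝ) : qform ρ z (t • X) = t ^ 2 * qform ρ z X := by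
  rw [qform, qform, smul_comm Complex.I t]
  simp only [map_smul, ContinuousLinearMap.smul_apply, smul_eq_mul]
  ring

theorem abs_qform_le : |qform ρ z X| ≤ ‖fderiv ℝ (fderiv ℝ ρ) z‖ * ‖X‖ ^ 2 := by
  have h1 := (fderiv ℝ (fderiv ℝ ρ) z).le_opNorm₂ X X
  have h2 := (fderiv ℝ (fderiv ℝ ρ) z).le_opNorm₂ (Complex.I • X) (Complex.I • X)
  have hIX : ‖Complex.I • X‖ = ‖X‖ := by
    rw [norm_smul, Complex.norm_I, one_mul]
  rw [hIX] at h2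
  rw [qform]
  rw [Real.norm_eq_abs] at h1 h2
  have := abs_add_le ((fderiv ℝ (fderiv ℝ ρ) z X) X)
    ((fderiv ℝ (fderiv ℝ ρ) z (Complex.I • X)) (Complex.I • X))
  rw [abs_mul]
  have h14 : |(1/4 : ℝ)| = 1/4 := by norm_num
  rw [h14]
  nlinarith [this, h1, h2,
    mul_nonneg (norm_nonneg (fderiv ℝ (fderiv ℝ ρ) z)) (sq_nonneg ‖X‖),
    abs_nonneg (((fderiv ℝ (fderiv ℝ ρ) z) X) X +
      ((fderiv ℝ (fderiv ℝ ρ) z) (Complex.I • X)) (Complex.I • X))]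

end forms
theorem key_nbhd {n : ℕ} {ρ : (Fin n → ℂ) → ℝ} (hρ : ContDiff ℝ 2 ρ) {z₀ : Fin n → ℂ}
    (hpos : ∀ X, X ≠ 0 → lform ρ z₀ X = 0 → 0 < qform ρ z₀ X) :
    ∃ s₁ > 0, ∃ δ > 0, ∃ c > 0, ∀ z X, ‖z - z₀‖ ≤ s₁ → ‖X‖ = 1 →
      ‖lform ρ z X‖ ≤ δ → c ≤ qform ρ z X := by
  by_contra hcon
  push_neg at hcon
  have hseq : ∀ j : ℕ, ∃ z X, ‖z - z₀‖ ≤ 1/(j+1) ∧ ‖X‖ = 1 ∧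
      ‖lform ρ z X‖ ≤ 1/(j+1) ∧ qform ρ z X < 1/(j+1) := by
    intro j
    have hpos' : (0:ℝ) < 1/(j+1) := by positivity
    obtain ⟨z, X, h⟩ := hcon (1/(j+1)) hpos' (1/(j+1)) hpos' (1/(j+1)) hpos'
    exact ⟨z, X, h⟩
  choose z X h1 h2 h3 h4 using hseq
  have hXs : ∀ j, X j ∈ Metric.sphere (0 : Fin n → ℂ) 1 :=
    fun j => mem_sphere_zero_iff_norm.mpr (h2 j)
  obtain ⟨a, ha, φ, hφ, hXa⟩ :=
    (isCompact_sphere (0 : Fin n → ℂ) 1).tendsto_subseq hXs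
  have htend0 : Filter.Tendsto (fun j : ℕ => 1/((φ j : ℝ)+1)) Filter.atTop (nhds 0) := by
    apply squeeze_zero (fun j => by positivity) (fun j => ?_)
      tendsto_one_div_add_atTop_nhds_zero_nat
    have hj : j ≤ φ j := hφ.le_apply
    have : (j : ℝ) + 1 ≤ (φ j : ℝ) + 1 := by
      have := (Nat.cast_le (α := ℝ)).mpr hj; linarith
    exact one_div_le_one_div_of_le (by positivity) this
  have hz : Filter.Tendsto (fun j => z (φ j)) Filter.atTop (nhds z₀) := by
    rw [tendsto_iff_norm_sub_tendsto_zero]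
    exact squeeze_zero (fun j => norm_nonneg _) (fun j => h1 (φ j)) htend0
  have hpair : Filter.Tendsto (fun j => (z (φ j), X (φ j))) Filter.atTop (nhds (z₀, a)) :=
    hz.prodMk_nhds hXa
  have hl := ((continuous_lform hρ).tendsto (z₀, a)).comp hpair
  have hq := ((continuous_qform hρ).tendsto (z₀, a)).comp hpair
  simp only [Function.comp_def] at hl hq
  have hlabs := (continuous_norm.tendsto (lform ρ z₀ a)).comp hl
  simp only [Function.comp_def] at hlabs
  have hl0 : lform ρ z₀ a = 0 := by
    have hle : ‖lform ρ z₀ a‖ ≤ 0 :=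
      le_of_tendsto_of_tendsto' hlabs htend0 (fun j => h3 (φ j))
    exact norm_eq_zero.mp (le_antisymm hle (norm_nonneg _))
  have hq0 : qform ρ z₀ a ≤ 0 :=
    le_of_tendsto_of_tendsto' hq htend0 (fun j => (h4 (φ j)).le)
  have ha' : a ≠ 0 := by
    have h5 : ‖a‖ = 1 := mem_sphere_zero_iff_norm.mp ha
    intro h; rw [h, norm_zero] at h5; norm_num at h5
  exact absurd (hpos a ha' hl0) (not_lt.mpr hq0)

section wirtstruct
variable {G G' : Type*} [NormedAddCommGroup G] [NormedSpace ℂ G]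
  [NormedAddCommGroup G'] [NormedSpace ℂ G'] {φ ψ : G → ℝ} {z X : G}

theorem wirt_real_add (hφ : DifferentiableAt ℝ φ z) (hψ : DifferentiableAt ℝ ψ z) :
    wirt (fun y => ((φ y + ψ y : ℝ) : ℂ)) X z =
      wirt (fun y => (φ y : ℂ)) X z + wirt (fun y => (ψ y : ℂ)) X z := by
  rw [wirt_real_eq (φ := fun y => φ y + ψ y) (hφ.add hψ), wirt_real_eq hφ, wirt_real_eq hψ,
    fderiv_fun_add hφ hψ]
  simp only [ContinuousLinearMap.add_apply]
  push_cast
  ring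

theorem wirt_real_zero : wirt (fun _ : G => ((0 : ℝ) : ℂ)) X z = 0 := by
  rw [wirt_real_eq (φ := fun _ : G => (0:ℝ)) (differentiableAt_const 0), fderiv_fun_const]
  simp

theorem wirt_real_sum {ι : Type*} (s : Finset ι) (f : ι → G → ℝ)
    (hf : ∀ i ∈ s, DifferentiableAt ℝ (f i) z) :
    wirt (fun y => ((∑ i ∈ s, f i y : ℝ) : ℂ)) X z
      = ∑ i ∈ s, wirt (fun y => (f i y : ℂ)) X z := by
  classical
  induction s using Finset.induction with
  | empty => simpa using wirt_real_zero
  | @insert a s' hx ih =>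
      simp only [Finset.sum_insert hx]
      rw [wirt_real_add (hf a (Finset.mem_insert_self a s'))
          (DifferentiableAt.fun_sum fun i hi => hf i (Finset.mem_insert_of_mem hi)),
        ih fun i hi => hf i (Finset.mem_insert_of_mem hi)]

theorem wirt_real_comp (L : G' →L[ℝ] G) (hL : ∀ x, L (Complex.I • x) = Complex.I • L x)
    {P X : G'} (h : DifferentiableAt ℝ φ (L P)) :
    wirt (fun x => (φ (L x) : ℂ)) X P = wirt (fun y => (φ y : ℂ)) (L X) (L P) := by
  rw [wirt_real_eq (φ := fun x => φ (L x)) (h.comp P L.differentiableAt),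
    wirt_real_eq h,
    show fderiv ℝ (fun x => φ (L x)) P = (fderiv ℝ φ (L P)).comp L from
      (h.hasFDerivAt.comp P L.hasFDerivAt).fderiv]
  simp only [ContinuousLinearMap.coe_comp', Function.comp_apply, hL X]

end wirtstruct

theorem wirt_g {β : ℝ} {c : ℂ} (hc : c ≠ 0) (v : ℂ) :
    wirt (fun y => ((Complex.normSq y ^ β : ℝ) : ℂ)) v c
      = ((β * Complex.normSq c ^ (β - 1) : ℝ) : ℂ) * ((starRingEnd ℂ) c * v) := by
  rw [wirt_real_eq (φ := fun y => Complex.normSq y ^ β) (hasFDerivAt_g hc).differentiableAt,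
    (hasFDerivAt_g (β := β) hc).fderiv]
  simp only [ContinuousLinearMap.smul_apply, Bc_apply, smul_eq_mul]
  exact onevar_wirt_arith (β * Complex.normSq c ^ (β - 1)) c v


set_option maxHeartbeats 1000000 in
/-- Near a strongly pseudoconvex point `z₀ ∈ bΩ`, every boundary point `(z,w)` of the
inflated domain `Ω_r^p` with `|z - z₀| < s` and all `w_k ≠ 0` is strongly pseudoconvex. -/
theorem inflated_domain_strongly_psc_near {n : ℕ} (p : ℕ) (r : ℝ) (hp : 0 < p)
    (hr : 0 < r) (hrp : r ≤ p)
    (ρ : (Fin n → ℂ) → ℝ) (hρ : ContDiff ℝ 2 ρ)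
    (Ω : Set (Fin n → ℂ)) (hΩ : Ω = {z | ρ z < 0}) (hΩbdd : Bornology.IsBounded Ω)
    (hnondeg : ∀ P ∈ frontier Ω, fderiv ℝ ρ P ≠ 0)
    (hpsc : LeviPseudoconvex ρ)
    (z₀ : Fin n → ℂ) (hz₀ : StronglyPscAt ρ z₀)
    (ρt : (Fin n → ℂ) × (Fin p → ℂ) → ℝ)
    (hρt : ρt = fun q => ρ q.1 + ∑ k, ‖q.2 k‖ ^ (2 * (p : ℝ) / r)) :
    ∃ s > 0, ∀ q : (Fin n → ℂ) × (Fin p → ℂ),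
      q ∈ frontier {q' | ρt q' < 0} → ‖q.1 - z₀‖ < s → (∀ k, q.2 k ≠ 0) →
        StronglyPscAt ρt q := by
  classical
  set β : ℝ := (p : ℝ) / r with hβdef
  have hβ : 0 < β := div_pos (Nat.cast_pos.mpr hp) hr
  haveI : Nonempty (Fin p) := Fin.pos_iff_nonempty.mp hp
  have hρt' : ρt = fun q => ρ q.1 + ∑ k, Complex.normSq (q.2 k) ^ β := by
    rw [hρt]; funext q; congr 1
    refine Finset.sum_congr rfl fun k _ => ?_
    rw [Complex.norm_def, Real.sqrt_eq_rpow, ← Real.rpow_mul (Complex.normSq_nonneg _)]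
    congr 1
    rw [hβdef]
    field_simp
  have hρz₀ : ρ z₀ = 0 := by
    have hfr := hz₀.1
    have hop : IsOpen {z | ρ z < 0} := isOpen_lt hρ.continuous continuous_const
    rw [hop.frontier_eq] at hfr
    have h1 : ρ z₀ ≤ 0 := closure_lt_subset_le hρ.continuous continuous_const hfr.1
    have h2 : ¬ ρ z₀ < 0 := hfr.2
    linarith
  have hpos : ∀ X, X ≠ 0 → lform ρ z₀ X = 0 → 0 < qform ρ z₀ X := by
    intro X hX hlf
    have h := hz₀.2 X hX (by
      rw [lform_eq_wirt (hρ.differentiable (by norm_num) z₀)]; exact hlf)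
    rwa [qform_eq hρ.contDiffAt] at h
  obtain ⟨s₁, hs₁, δ, hδ, c, hc, hkey⟩ := key_nbhd hρ hpos
  obtain ⟨C₀, hC₀⟩ := (isCompact_closedBall z₀ s₁).exists_bound_of_continuousOn
    (((hρ.fderiv_right (m := 1) (by norm_num)).continuous_fderiv (by norm_num)).continuousOn
      (s := Metric.closedBall z₀ s₁))
  set C : ℝ := max C₀ 1 with hCdef
  have hC : (0:ℝ) < C := lt_of_lt_of_le one_pos (le_max_right _ _)
  have hCb : ∀ z, ‖z - z₀‖ ≤ s₁ → ∀ X : Fin n → ℂ, |qform ρ z X| ≤ C * ‖X‖^2 := by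
    intro z hzz X
    refine le_trans abs_qform_le ?_
    have h1 : ‖fderiv ℝ (fderiv ℝ ρ) z‖ ≤ C₀ :=
      hC₀ z (by rwa [Metric.mem_closedBall, dist_eq_norm])
    have h2 : ‖fderiv ℝ (fderiv ℝ ρ) z‖ ≤ C := le_trans h1 (le_max_left _ _)
    exact mul_le_mul_of_nonneg_right h2 (sq_nonneg _)
  have hε : (0:ℝ) < δ^2/(2*C) := by positivity
  obtain ⟨s₂, hs₂, hs₂p⟩ := Metric.continuousAt_iff.mp
    (hρ.continuous.continuousAt (x := z₀)) (δ^2/(2*C)) hε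
  refine ⟨min s₁ s₂, lt_min hs₁ hs₂, ?_⟩
  intro q hqfr hqz hw
  have hz1 : ‖q.1 - z₀‖ ≤ s₁ := le_of_lt (lt_of_lt_of_le hqz (min_le_left _ _))
  have hcontρt : Continuous ρt := by
    rw [hρt']
    exact (hρ.continuous.comp continuous_fst).add (continuous_finset_sum _ fun k _ =>
      Continuous.rpow_const
        (contDiff_normSq.continuous.comp ((continuous_apply k).comp continuous_snd))
        (fun _ => Or.inr hβ.le))
  have hρt0 : ρt q = 0 := by
    have hqfr' := hqfr
    have hop : IsOpen {x | ρt x < 0} := isOpen_lt hcontρt continuous_const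
    rw [hop.frontier_eq] at hqfr'
    have h1 : ρt q ≤ 0 := closure_lt_subset_le hcontρt continuous_const hqfr'.1
    have h2 : ¬ ρt q < 0 := hqfr'.2
    linarith
  set lam : ℝ := ∑ k, Complex.normSq (q.2 k) ^ β with hlamdef
  have hlampos : 0 < lam :=
    Finset.sum_pos (fun k _ => Real.rpow_pos_of_pos (Complex.normSq_pos.mpr (hw k)) β)
      Finset.univ_nonempty
  have hlameq : lam = - ρ q.1 := by
    rw [hρt'] at hρt0
    simp only at hρt0
    linarith
  have hlamsmall : C * lam ≤ δ^2/2 := by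
    have hd : dist q.1 z₀ < s₂ := by
      rw [dist_eq_norm]; exact lt_of_lt_of_le hqz (min_le_right _ _)
    have := hs₂p hd
    rw [Real.dist_eq, hρz₀, sub_zero] at this
    have hlamle : lam < δ^2/(2*C) := by
      rw [hlameq]; calc -ρ q.1 ≤ |ρ q.1| := neg_le_abs _
        _ < δ^2/(2*C) := this
    calc C * lam ≤ C * (δ^2/(2*C)) := by nlinarith
      _ = δ^2/2 := by field_simp
  set Lz : ((Fin n → ℂ) × (Fin p → ℂ)) →L[ℝ] (Fin n → ℂ) :=
    (ContinuousLinearMap.fst ℂ (Fin n → ℂ) (Fin p → ℂ)).restrictScalars ℝ with hLzdef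
  set Lk : Fin p → (((Fin n → ℂ) × (Fin p → ℂ)) →L[ℝ] ℂ) := fun k =>
    ((ContinuousLinearMap.proj k).comp
      (ContinuousLinearMap.snd ℂ (Fin n → ℂ) (Fin p → ℂ))).restrictScalars ℝ with hLkdef
  have hLzI : ∀ x : (Fin n → ℂ) × (Fin p → ℂ), Lz (Complex.I • x) = Complex.I • Lz x :=
    fun x => rfl
  have hLkI : ∀ (k) (x : (Fin n → ℂ) × (Fin p → ℂ)),
      Lk k (Complex.I • x) = Complex.I • Lk k x := fun k x => rfl
  have hdiffρ1 : DifferentiableAt ℝ (fun y : (Fin n → ℂ) × (Fin p → ℂ) => ρ y.1) q :=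
    (hρ.differentiable (by norm_num) q.1).comp q Lz.differentiableAt
  have hdiffk : ∀ k, DifferentiableAt ℝ
      (fun y : (Fin n → ℂ) × (Fin p → ℂ) => Complex.normSq (y.2 k) ^ β) q :=
    fun k => DifferentiableAt.comp (g := fun c : ℂ => Complex.normSq c ^ β) q (hasFDerivAt_g (hw k)).differentiableAt
      (Lk k).differentiableAt
  have hC2sum : ContDiffAt ℝ 2
      (fun y : (Fin n → ℂ) × (Fin p → ℂ) => ∑ k, Complex.normSq (y.2 k) ^ β) q :=
    ContDiffAt.sum fun k _ =>
      ContDiffAt.comp q (contDiffAt_g (hw k)) (Lk k).contDiff.contDiffAt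
  have hC2ρ1 : ContDiffAt ℝ 2 (fun y : (Fin n → ℂ) × (Fin p → ℂ) => ρ y.1) q :=
    hρ.contDiffAt.comp q Lz.contDiff.contDiffAt
  have hC2ρt : ContDiffAt ℝ 2 ρt q := by
    rw [hρt']; exact hC2ρ1.add hC2sum
  refine ⟨hqfr, ?_⟩
  intro X hX0 htan
  -- the tangency condition in concrete form
  have h2 : wirt (fun y : (Fin n → ℂ) × (Fin p → ℂ) => (ρ y.1 : ℂ)) X q
      = lform ρ q.1 X.1 := by
    rw [show (fun y : (Fin n → ℂ) × (Fin p → ℂ) => (ρ y.1 : ℂ))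
        = (fun y => (ρ (Lz y) : ℂ)) from rfl,
      wirt_real_comp Lz hLzI (hρ.differentiable (by norm_num) _)]
    exact lform_eq_wirt (hρ.differentiable (by norm_num) _)
  have h3 : ∀ k, wirt (fun y : (Fin n → ℂ) × (Fin p → ℂ) =>
        ((Complex.normSq (y.2 k) ^ β : ℝ) : ℂ)) X q
      = ((β * Complex.normSq (q.2 k) ^ (β - 1) : ℝ) : ℂ)
          * ((starRingEnd ℂ) (q.2 k) * X.2 k) := by
    intro k
    rw [show (fun y : (Fin n → ℂ) × (Fin p → ℂ) => ((Complex.normSq (y.2 k) ^ β : ℝ) : ℂ))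
        = (fun y => ((Complex.normSq ((Lk k) y) ^ β : ℝ) : ℂ)) from rfl,
      wirt_real_comp (Lk k) (hLkI k) (hasFDerivAt_g (hw k)).differentiableAt]
    exact wirt_g (hw k) (X.2 k)
  have hwirt : wirt (fun y => (ρt y : ℂ)) X q
      = lform ρ q.1 X.1 + ∑ k, ((β * Complex.normSq (q.2 k) ^ (β - 1) : ℝ) : ℂ) *
          ((starRingEnd ℂ) (q.2 k) * X.2 k) := by
    conv_lhs => rw [hρt']
    rw [wirt_real_add hdiffρ1 (DifferentiableAt.fun_sum fun k _ => hdiffk k),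
      wirt_real_sum Finset.univ _ (fun k _ => hdiffk k), h2]
    exact congrArg _ (Finset.sum_congr rfl fun k _ => h3 k)
  have htan' : lform ρ q.1 X.1
      = - ∑ k, ((β * Complex.normSq (q.2 k) ^ (β - 1) : ℝ) : ℂ) *
          ((starRingEnd ℂ) (q.2 k) * X.2 k) := by
    rw [hwirt] at htan
    linear_combination htan
  -- second order decomposition
  have hD2 : ∀ u v : (Fin n → ℂ) × (Fin p → ℂ), D2 ρt q u v
      = D2 ρ q.1 u.1 v.1
        + ∑ k, D2 (fun c : ℂ => Complex.normSq c ^ β) (q.2 k) (u.2 k) (v.2 k) := by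
    intro u v
    rw [hρt']
    rw [D2_add hC2ρ1 hC2sum, D2_sum Finset.univ
      (fun k (y : (Fin n → ℂ) × (Fin p → ℂ)) => Complex.normSq (y.2 k) ^ β)
      (fun k _ => ContDiffAt.comp q (contDiffAt_g (hw k)) (Lk k).contDiff.contDiffAt)]
    congr 1
    · rw [show (fun y : (Fin n → ℂ) × (Fin p → ℂ) => ρ y.1) = (fun y => ρ (Lz y)) from rfl,
        D2_comp Lz hρ.contDiffAt]
      rfl
    · refine Finset.sum_congr rfl fun k _ => ?_
      rw [show (fun y : (Fin n → ℂ) × (Fin p → ℂ) => Complex.normSq (y.2 k) ^ β)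
          = (fun y => Complex.normSq ((Lk k) y) ^ β) from rfl,
        D2_comp (Lk k) (contDiffAt_g (hw k))]
      rfl
  have hre : (cHessian ρt q X).re = qform ρ q.1 X.1
      + ∑ k, β^2 * Complex.normSq (q.2 k) ^ (β-1) * Complex.normSq (X.2 k) := by
    rw [cHessian_re_eq hC2ρt, hD2 X X, hD2 (Complex.I • X) (Complex.I • X)]
    have hfst : (Complex.I • X).1 = Complex.I • X.1 := rfl
    have hsnd : ∀ k, (Complex.I • X).2 k = Complex.I • X.2 k := fun k => rfl
    simp only [hfst, hsnd]
    rw [show qform ρ q.1 X.1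
        = (1/4) * (D2 ρ q.1 X.1 X.1 + D2 ρ q.1 (Complex.I • X.1) (Complex.I • X.1)) from by
      rw [qform, D2_eq_fderiv_fderiv hρ.contDiffAt, D2_eq_fderiv_fderiv hρ.contDiffAt]]
    conv_rhs => rw [show (∑ k, β^2 * Complex.normSq (q.2 k) ^ (β-1) * Complex.normSq (X.2 k))
        = ∑ k, (1/4 : ℝ) * (D2 (fun c : ℂ => Complex.normSq c ^ β) (q.2 k) (X.2 k) (X.2 k)
          + D2 (fun c : ℂ => Complex.normSq c ^ β) (q.2 k)
            (Complex.I • X.2 k) (Complex.I • X.2 k)) from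
      Finset.sum_congr rfl fun k _ =>
        (onevar_levi (hw k) (Complex.normSq_pos.mpr (hw k)) (X.2 k)).symm]
    rw [← Finset.mul_sum, Finset.sum_add_distrib]
    ring
  rw [hre]
  set S : ℝ := ∑ k, β^2 * Complex.normSq (q.2 k) ^ (β-1) * Complex.normSq (X.2 k) with hSdef
  have hS0 : 0 ≤ S := Finset.sum_nonneg fun k _ =>
    mul_nonneg (mul_nonneg (sq_nonneg β) (Real.rpow_nonneg (Complex.normSq_nonneg _) _))
      (Complex.normSq_nonneg _)
  have hrpow : ∀ t : ℝ, 0 < t → (t^(β-1))^2 * t = t^β * t^(β-1) := by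
    intro t ht
    have e1 : (t^(β-1))^2 = t^(β-1) * t^(β-1) := sq _
    calc (t^(β-1))^2 * t = t^(β-1) * t^(β-1) * t^(1:ℝ) := by rw [e1, Real.rpow_one]
      _ = t^((β-1) + (β-1) + 1) := by rw [Real.rpow_add ht, Real.rpow_add ht]
      _ = t^(β + (β-1)) := by ring_nf
      _ = t^β * t^(β-1) := Real.rpow_add ht _ _
  have habsT : ‖lform ρ q.1 X.1‖ ^ 2 ≤ lam * S := by
    rw [htan', norm_neg]
    have h1 : ‖∑ k, ((β * Complex.normSq (q.2 k) ^ (β - 1) : ℝ) : ℂ)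
          * ((starRingEnd ℂ) (q.2 k) * X.2 k)‖
        ≤ ∑ k, β * Complex.normSq (q.2 k) ^ (β-1)
            * (‖q.2 k‖ * ‖X.2 k‖) := by
      refine le_trans (norm_sum_le _ _) (Finset.sum_le_sum fun k _ => ?_)
      rw [norm_mul, norm_mul, Complex.norm_conj, Complex.norm_real, Real.norm_eq_abs,
        abs_of_nonneg (mul_nonneg hβ.le (Real.rpow_nonneg (Complex.normSq_nonneg _) _))]
    have h2 : (∑ k, β * Complex.normSq (q.2 k) ^ (β-1)
          * (‖q.2 k‖ * ‖X.2 k‖))^2 ≤ lam * S := by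
      rw [hlamdef, hSdef]
      refine Finset.sum_sq_le_sum_mul_sum_of_sq_eq_mul Finset.univ
        (fun k _ => Real.rpow_nonneg (Complex.normSq_nonneg _) _)
        (fun k _ => mul_nonneg (mul_nonneg (sq_nonneg β)
          (Real.rpow_nonneg (Complex.normSq_nonneg _) _)) (Complex.normSq_nonneg _))
        (fun k _ => ?_)
      have hsq : ‖q.2 k‖ ^ 2 = Complex.normSq (q.2 k) := Complex.sq_norm _
      have hsqv : ‖X.2 k‖ ^ 2 = Complex.normSq (X.2 k) := Complex.sq_norm _
      have hrp := hrpow (Complex.normSq (q.2 k)) (Complex.normSq_pos.mpr (hw k))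
      linear_combination (β^2 * (Complex.normSq (q.2 k) ^ (β-1))^2 * ‖X.2 k‖^2) * hsq
        + (β^2 * (Complex.normSq (q.2 k) ^ (β-1))^2 * Complex.normSq (q.2 k)) * hsqv
        + (β^2 * Complex.normSq (X.2 k)) * hrp
    exact le_trans (pow_le_pow_left₀ (norm_nonneg _) h1 2) h2
  by_cases hcase : ‖lform ρ q.1 X.1‖ ≤ δ * ‖X.1‖
  · -- nearly tangential case
    have hq1 : c * ‖X.1‖^2 ≤ qform ρ q.1 X.1 := by
      rcases eq_or_ne X.1 0 with hu | hu
      · rw [hu]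
        simp only [norm_zero, ne_eq, OfNat.ofNat_ne_zero, not_false_eq_true, zero_pow,
          mul_zero, qform, smul_zero, map_zero, ContinuousLinearMap.zero_apply]
        norm_num
      · have ht : (0:ℝ) < ‖X.1‖ := norm_pos_iff.mpr hu
        have hX' : ‖(‖X.1‖⁻¹ : ℝ) • X.1‖ = 1 := by
          rw [norm_smul, Real.norm_eq_abs, abs_of_pos (inv_pos.mpr ht)]
          field_simp
        have habs' : ‖lform ρ q.1 ((‖X.1‖⁻¹ : ℝ) • X.1)‖ ≤ δ := by
          rw [lform_smul, norm_mul, Complex.norm_real, Real.norm_eq_abs, abs_of_pos (inv_pos.mpr ht),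
            inv_mul_le_iff₀ ht]
          exact hcase.trans (le_of_eq (mul_comm _ _))
        have hkq := hkey q.1 _ hz1 hX' habs'
        rw [qform_smul] at hkq
        calc c * ‖X.1‖^2 ≤ ((‖X.1‖⁻¹)^2 * qform ρ q.1 X.1) * ‖X.1‖^2 :=
              mul_le_mul_of_nonneg_right hkq (sq_nonneg _)
          _ = qform ρ q.1 X.1 := by field_simp
    rcases eq_or_ne X.1 0 with hu | hu
    · have hv : X.2 ≠ 0 := by
        intro h
        exact hX0 (Prod.ext hu h)
      obtain ⟨k₀, hk₀⟩ := Function.ne_iff.mp hv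
      have hSpos : 0 < S := Finset.sum_pos'
        (fun k _ => mul_nonneg (mul_nonneg (sq_nonneg β)
          (Real.rpow_nonneg (Complex.normSq_nonneg _) _)) (Complex.normSq_nonneg _))
        ⟨k₀, Finset.mem_univ _, mul_pos (mul_pos (pow_pos hβ 2)
          (Real.rpow_pos_of_pos (Complex.normSq_pos.mpr (hw k₀)) _))
          (Complex.normSq_pos.mpr hk₀)⟩
      have : 0 ≤ qform ρ q.1 X.1 := le_trans (by positivity) hq1
      linarith
    · have ht : (0:ℝ) < ‖X.1‖ := norm_pos_iff.mpr hu
      have : 0 < qform ρ q.1 X.1 := lt_of_lt_of_le (by positivity) hq1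
      linarith
  · -- transversal case
    have habs : δ * ‖X.1‖ < ‖lform ρ q.1 X.1‖ := not_le.mp hcase
    have h5 : (δ * ‖X.1‖)^2 < ‖lform ρ q.1 X.1‖^2 :=
      pow_lt_pow_left₀ habs (mul_nonneg hδ.le (norm_nonneg _)) (by norm_num)
    have hsq : δ^2 * ‖X.1‖^2 < lam * S := by
      have : (δ * ‖X.1‖)^2 = δ^2 * ‖X.1‖^2 := by ring
      linarith [habsT]
    have hSpos : 0 < S := by
      by_contra h
      push_neg at h
      nlinarith [hlampos, mul_nonneg (sq_nonneg δ) (sq_nonneg ‖X.1‖)]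
    have hQlow : -(C * ‖X.1‖^2) ≤ qform ρ q.1 X.1 := by
      have := hCb q.1 hz1 X.1
      linarith [neg_abs_le (qform ρ q.1 X.1)]
    have hδ2 : (0:ℝ) < δ^2 := by positivity
    have e1 : C * (δ^2 * ‖X.1‖^2) < C * (lam * S) := mul_lt_mul_of_pos_left hsq hC
    have e2 : (C * lam) * S ≤ (δ^2/2) * S := mul_le_mul_of_nonneg_right hlamsmall hS0
    have e3 : δ^2 * (C * ‖X.1‖^2) < δ^2 * (S/2) := by nlinarith
    have e4 : C * ‖X.1‖^2 < S/2 := (mul_lt_mul_iff_right₀ hδ2).mp e3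
    linarith
end

section
/- Let Ω ⊂ ℂⁿ be a bounded domain, μ a finite admissible weight, r ≥ 0, and z₀ ∈ bΩ. Suppose z₀ admits a holomorphic peak function g (holomorphic on Ω, continuous on the closure, g(z₀)=1 and |g| < 1 elsewhere on the closure). Then for every open neighborhood U of z₀, the mass of the normalized Bergman kernel outside U tends to zero: ∫_{Ω∖U} |k_z^r(w)|² (−ρ(w))^r dV(w) → 0 as z → z₀ (z ∈ Ω). -/
open MeasureTheory Filter Topology

/-- Membership in the weighted Bergman space `A²(Ω, μ dV)`. -/
def MemA2 {E : Type*} [NormedAddCommGroup E] [NormedSpace ℂ E] [MeasureSpace E]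
    (Ω : Set E) (μ : E → ℝ) (f : E → ℂ) : Prop :=
  DifferentiableOn ℂ f Ω ∧ IntegrableOn (fun z => ‖f z‖ ^ 2 * μ z) Ω volume

/-- `K` is the weighted Bergman kernel of `Ω` with weight `μ`. -/
def IsBergmanKernel {E : Type*} [NormedAddCommGroup E] [NormedSpace ℂ E] [MeasureSpace E]
    (Ω : Set E) (μ : E → ℝ) (K : E → E → ℂ) : Prop :=
  (∀ z ∈ Ω, MemA2 Ω μ fun w => K w z) ∧
  (∀ z ∈ Ω, ∀ w ∈ Ω, K z w = starRingEnd ℂ (K w z)) ∧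
  (∀ f, MemA2 Ω μ f → ∀ z ∈ Ω, f z = ∫ w in Ω, K z w * f w * (μ w : ℂ))

private lemma bergman_self_real {E : Type*} [NormedAddCommGroup E] [NormedSpace ℂ E]
    [MeasureSpace E] {Ω : Set E} {μ : E → ℝ} {K : E → E → ℂ}
    (hK : IsBergmanKernel Ω μ K) {z : E} (hz : z ∈ Ω) : K z z = ((K z z).re : ℂ) := by
  have h := hK.2.1 z hz z hz
  have him : (K z z).im = 0 := by
    have h2 := congrArg Complex.im h
    simp only [Complex.conj_im] at h2
    linarith
  exact Complex.ext (by simp) (by simp [him])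

private lemma key_estimate {n : ℕ} {Ω : Set (Fin n → ℂ)} (hΩopen : IsOpen Ω)
    {μ : (Fin n → ℂ) → ℝ} (hμ : ∀ w ∈ Ω, 0 ≤ μ w)
    {K : (Fin n → ℂ) → (Fin n → ℂ) → ℂ} (hK : IsBergmanKernel Ω μ K)
    {g : (Fin n → ℂ) → ℂ} (hghol : DifferentiableOn ℂ g Ω)
    (hgbd : ∀ w ∈ Ω, ‖g w‖ ≤ 1)
    {V : Set (Fin n → ℂ)} (hV : IsOpen V)
    {c₁ : ℝ} (hc₁0 : 0 ≤ c₁) (hc₁ : ∀ w ∈ Ω \ V, ‖g w‖ ≤ c₁)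
    (m : ℕ) {z : Fin n → ℂ} (hz : z ∈ Ω) :
    ∫ w in Ω \ V, ‖K w z‖ ^ 2 * μ w
      ≤ (1 - ‖g z‖ ^ m + c₁ ^ m) * (K z z).re := by
  classical
  set h : (Fin n → ℂ) → ℝ := fun w => ‖K w z‖ ^ 2 * μ w with hh_def
  have hInt : IntegrableOn h Ω volume := (hK.1 z hz).2
  have hmeasΩ : MeasurableSet Ω := hΩopen.measurableSet
  have hmeasA : MeasurableSet (Ω ∩ V) := hmeasΩ.inter hV.measurableSet
  have hmeasD : MeasurableSet (Ω \ V) := hmeasΩ.diff hV.measurableSet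
  have hh0 : ∀ w ∈ Ω, 0 ≤ h w := fun w hw =>
    mul_nonneg (by positivity) (hμ w hw)
  -- conj * self
  have hconjmul : ∀ w, (starRingEnd ℂ) (K w z) * K w z = ((‖K w z‖ ^ 2 : ℝ) : ℂ) := by
    intro w
    have := Complex.mul_conj (K w z)
    rw [mul_comm] at this
    rw [this, Complex.normSq_eq_norm_sq]
  -- total mass
  have hmass : ∫ w in Ω, h w = (K z z).re := by
    have h1 := hK.2.2 _ (hK.1 z hz) z hz
    have h2 : ∫ w in Ω, K z w * K w z * (μ w : ℂ) = ∫ w in Ω, ((h w : ℝ) : ℂ) := by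
      apply setIntegral_congr_fun hmeasΩ
      intro w hw
      show K z w * K w z * (μ w : ℂ) = ((h w : ℝ) : ℂ)
      rw [hK.2.1 z hz w hw, hconjmul w]
      simp only [hh_def]
      push_cast
      ring
    have h4 : (∫ w in Ω, ((h w : ℝ) : ℂ)) = (((∫ w in Ω, h w) : ℝ) : ℂ) :=
      integral_ofReal
    have h5 : (((K z z).re : ℝ) : ℂ) = (((∫ w in Ω, h w) : ℝ) : ℂ) := by
      rw [← bergman_self_real hK hz, h1, h2, h4]
    exact (Complex.ofReal_inj.mp h5).symm
  have hcnn : 0 ≤ (K z z).re := by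
    rw [← hmass]
    exact setIntegral_nonneg hmeasΩ hh0
  -- membership of g^m * K(·,z)
  have hgK : MemA2 Ω μ (fun w => g w ^ m * K w z) := by
    constructor
    · exact (hghol.pow m).mul (hK.1 z hz).1
    · have heq : (fun w => ‖g w ^ m * K w z‖ ^ 2 * μ w)
          = fun w => ‖g w ^ m‖ ^ 2 * h w := by
        funext w
        rw [norm_mul, mul_pow, hh_def]
        ring
      rw [IntegrableOn, heq]
      apply Integrable.mono' hInt
      · exact (((hghol.continuousOn.pow m).norm.pow 2).aestronglyMeasurable
          hmeasΩ).mul hInt.1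
      · filter_upwards [ae_restrict_mem hmeasΩ] with w hw
        have hg1 : ‖g w ^ m‖ ≤ 1 := by
          rw [norm_pow]
          exact pow_le_one₀ (norm_nonneg _) (hgbd w hw)
        have : 0 ≤ ‖g w ^ m‖ ^ 2 * h w :=
          mul_nonneg (by positivity) (hh0 w hw)
        rw [Real.norm_eq_abs, abs_of_nonneg this]
        have ht2 : ‖g w ^ m‖ ^ 2 ≤ 1 := pow_le_one₀ (norm_nonneg _) hg1
        exact mul_le_of_le_one_left (hh0 w hw) ht2
  -- reproducing formula for g^m K(·,z)
  have hrep : g z ^ m * K z z = ∫ w in Ω, g w ^ m * ((h w : ℝ) : ℂ) := by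
    have h1 := hK.2.2 _ hgK z hz
    rw [h1]
    apply setIntegral_congr_fun hmeasΩ
    intro w hw
    show K z w * (g w ^ m * K w z) * (μ w : ℂ) = g w ^ m * ((h w : ℝ) : ℂ)
    rw [hK.2.1 z hz w hw]
    have h2 := hconjmul w
    calc (starRingEnd ℂ) (K w z) * (g w ^ m * K w z) * (μ w : ℂ)
        = g w ^ m * ((starRingEnd ℂ) (K w z) * K w z) * (μ w : ℂ) := by ring
      _ = g w ^ m * (((‖K w z‖ ^ 2 : ℝ) : ℂ) * (μ w : ℂ)) := by rw [h2]; ring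
      _ = g w ^ m * ((h w : ℝ) : ℂ) := by
          simp only [hh_def]; push_cast; ring
  -- the key lower bound
  have hstep : ‖g z‖ ^ m * (K z z).re
      ≤ ∫ w in Ω, ‖g w‖ ^ m * h w := by
    have h1 : ‖g z ^ m * K z z‖ = ‖g z‖ ^ m * (K z z).re := by
      have hKre : ‖K z z‖ = (K z z).re := by
        conv_lhs => rw [bergman_self_real hK hz]
        rw [Complex.norm_real, Real.norm_eq_abs, abs_of_nonneg hcnn]
      rw [norm_mul, norm_pow, hKre]
    calc ‖g z‖ ^ m * (K z z).re
        = ‖g z ^ m * K z z‖ := h1.symm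
      _ = ‖∫ w in Ω, g w ^ m * ((h w : ℝ) : ℂ)‖ := by rw [hrep]
      _ ≤ ∫ w in Ω, ‖g w ^ m * ((h w : ℝ) : ℂ)‖ := norm_integral_le_integral_norm _
      _ = ∫ w in Ω, ‖g w‖ ^ m * h w := by
          apply setIntegral_congr_fun hmeasΩ
          intro w hw
          show ‖g w ^ m * ((h w : ℝ) : ℂ)‖ = ‖g w‖ ^ m * h w
          rw [norm_mul, norm_pow, Complex.norm_real,
            Real.norm_eq_abs, abs_of_nonneg (hh0 w hw)]
  -- integrability of |g|^m * h
  have hpmInt : IntegrableOn (fun w => ‖g w‖ ^ m * h w) Ω volume := by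
    apply Integrable.mono' hInt
    · exact (((continuous_norm.comp_continuousOn hghol.continuousOn).pow
        m).aestronglyMeasurable hmeasΩ).mul hInt.1
    · filter_upwards [ae_restrict_mem hmeasΩ] with w hw
      have hg1 : ‖g w‖ ^ m ≤ 1 :=
        pow_le_one₀ (norm_nonneg _) (hgbd w hw)
      have h0 : 0 ≤ ‖g w‖ ^ m * h w :=
        mul_nonneg (by positivity) (hh0 w hw)
      rw [Real.norm_eq_abs, abs_of_nonneg h0]
      nlinarith [hh0 w hw]
  -- splitting
  have hsplit_h : ∫ w in Ω \ V, h w = (K z z).re - ∫ w in Ω ∩ V, h w := by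
    have := integral_diff (μ := volume) hmeasA hInt Set.inter_subset_left (f := h)
    rw [Set.diff_self_inter] at this
    rw [this, hmass]
  have hsplit_pm : ∫ w in Ω \ V, ‖g w‖ ^ m * h w
      = (∫ w in Ω, ‖g w‖ ^ m * h w)
        - ∫ w in Ω ∩ V, ‖g w‖ ^ m * h w := by
    have := integral_diff (μ := volume) hmeasA hpmInt Set.inter_subset_left
      (f := fun w => ‖g w‖ ^ m * h w)
    rw [Set.diff_self_inter] at this
    exact this
  -- bound on Ω \ V
  have hDbound : ∫ w in Ω \ V, ‖g w‖ ^ m * h w ≤ c₁ ^ m * (K z z).re := by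
    have h1 : ∫ w in Ω \ V, ‖g w‖ ^ m * h w
        ≤ ∫ w in Ω \ V, c₁ ^ m * h w := by
      apply setIntegral_mono_on (hpmInt.mono_set Set.diff_subset)
        ((hInt.mono_set Set.diff_subset).const_mul _) hmeasD
      intro w hw
      have := pow_le_pow_left₀ (norm_nonneg _) (hc₁ w hw) m
      exact mul_le_mul_of_nonneg_right this (hh0 w hw.1)
    have h2 : ∫ w in Ω \ V, c₁ ^ m * h w = c₁ ^ m * ∫ w in Ω \ V, h w := by
      rw [integral_const_mul]
    have h3 : ∫ w in Ω \ V, h w ≤ (K z z).re := by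
      rw [← hmass]
      apply setIntegral_mono_set hInt
      · filter_upwards [ae_restrict_mem hmeasΩ] with w hw using hh0 w hw
      · exact HasSubset.Subset.eventuallyLE Set.diff_subset
    calc ∫ w in Ω \ V, ‖g w‖ ^ m * h w
        ≤ c₁ ^ m * ∫ w in Ω \ V, h w := h2 ▸ h1
      _ ≤ c₁ ^ m * (K z z).re := by
          exact mul_le_mul_of_nonneg_left h3 (pow_nonneg hc₁0 m)
  -- bound on Ω ∩ V
  have hAbound : ∫ w in Ω ∩ V, ‖g w‖ ^ m * h w ≤ ∫ w in Ω ∩ V, h w := by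
    apply setIntegral_mono_on (hpmInt.mono_set Set.inter_subset_left)
      (hInt.mono_set Set.inter_subset_left) hmeasA
    intro w hw
    have hg1 : ‖g w‖ ^ m ≤ 1 :=
      pow_le_one₀ (norm_nonneg _) (hgbd w hw.1)
    nlinarith [hh0 w hw.1]
  -- combine
  have hcore : ‖g z‖ ^ m * (K z z).re - c₁ ^ m * (K z z).re
      ≤ ∫ w in Ω ∩ V, h w := by
    linarith [hstep, hDbound, hAbound, hsplit_pm]
  rw [hsplit_h]
  nlinarith [hcore]

/-- If `z₀ ∈ bΩ` admits a holomorphic peak function, then for any neighborhood `U` of `z₀`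
the mass of the normalized weighted Bergman kernel outside `U` tends to `0` as `z → z₀`:
`∫_{Ω∖U} |k_z^r(w)|² (-ρ(w))^r dV(w) → 0`. -/
theorem kernel_mass_outside_nbhd_tendsto_zero {n : ℕ}
    (Ω : Set (Fin n → ℂ)) (hΩopen : IsOpen Ω) (hΩbdd : Bornology.IsBounded Ω)
    (ρ : (Fin n → ℂ) → ℝ) (hdef : Ω = {z | ρ z < 0}) (r : ℝ) (hr : 0 ≤ r)
    (K : (Fin n → ℂ) → (Fin n → ℂ) → ℂ)
    (hK : IsBergmanKernel Ω (fun w => (-ρ w) ^ r) K)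
    (hKpos : ∀ z ∈ Ω, 0 < (K z z).re)
    (z₀ : Fin n → ℂ) (hz₀ : z₀ ∈ frontier Ω)
    (g : (Fin n → ℂ) → ℂ) (hghol : DifferentiableOn ℂ g Ω)
    (hgcont : ContinuousOn g (closure Ω)) (hgpeak : g z₀ = 1)
    (hglt : ∀ w ∈ closure Ω, w ≠ z₀ → ‖g w‖ < 1)
    (U : Set (Fin n → ℂ)) (hU : U ∈ nhds z₀) :
    Tendsto (fun z => ∫ w in Ω \ U,
        ‖K w z / (Real.sqrt ((K z z).re) : ℂ)‖ ^ 2 * (-ρ w) ^ r)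
      (nhdsWithin z₀ Ω) (𝓝 0) := by
  classical
  set μ : (Fin n → ℂ) → ℝ := fun w => (-ρ w) ^ r with hμdef
  have hμ : ∀ w ∈ Ω, 0 ≤ μ w := by
    intro w hw
    rw [hdef] at hw
    exact Real.rpow_nonneg (by simpa using hw.le) r
  have hz₀cl : z₀ ∈ closure Ω := frontier_subset_closure hz₀
  have hgbd : ∀ w ∈ closure Ω, ‖g w‖ ≤ 1 := by
    intro w hw
    by_cases hwz : w = z₀
    · subst hwz; rw [hgpeak]; simp
    · exact (hglt w hw hwz).le
  obtain ⟨V, hVU, hVopen, hz₀V⟩ := mem_nhds_iff.mp hU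
  -- the peak constant
  obtain ⟨c₁, hc₁0, hc₁lt, hc₁⟩ :
      ∃ c₁ : ℝ, 0 ≤ c₁ ∧ c₁ < 1 ∧ ∀ w ∈ Ω \ V, ‖g w‖ ≤ c₁ := by
    set S : Set (Fin n → ℂ) := closure Ω \ V with hSdef
    have hScl : IsClosed S := isClosed_closure.sdiff hVopen
    have hSbd : Bornology.IsBounded S :=
      (hΩbdd.closure.subset Set.diff_subset)
    have hScpt : IsCompact S := Metric.isCompact_of_isClosed_isBounded hScl hSbd
    rcases S.eq_empty_or_nonempty with hS | hS
    · refine ⟨0, le_rfl, one_pos, fun w hw => ?_⟩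
      exact absurd (hS ▸ (⟨subset_closure hw.1, hw.2⟩ : w ∈ S)) (Set.notMem_empty w)
    · have hcont : ContinuousOn (fun w => ‖g w‖) S :=
        continuous_norm.comp_continuousOn (hgcont.mono Set.diff_subset)
      obtain ⟨w₀, hw₀S, hw₀⟩ := hScpt.exists_isMaxOn hS hcont
      refine ⟨‖g w₀‖, norm_nonneg _, ?_, ?_⟩
      · exact hglt w₀ hw₀S.1 (fun he => hw₀S.2 (he ▸ hz₀V))
      · intro w hw
        exact hw₀ (⟨subset_closure hw.1, hw.2⟩ : w ∈ S)
  have hmeasΩ : MeasurableSet Ω := hΩopen.measurableSet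
  -- rewrite the integrand
  have hFeq : ∀ z ∈ Ω, (∫ w in Ω \ U,
      ‖K w z / (Real.sqrt ((K z z).re) : ℂ)‖ ^ 2 * μ w)
      = (∫ w in Ω \ U, ‖K w z‖ ^ 2 * μ w) / (K z z).re := by
    intro z hz
    have hc : (0:ℝ) < (K z z).re := hKpos z hz
    have h1 : ∀ w, ‖K w z / (Real.sqrt ((K z z).re) : ℂ)‖ ^ 2 * μ w
        = (‖K w z‖ ^ 2 * μ w) / (K z z).re := by
      intro w
      rw [norm_div, Complex.norm_real, Real.norm_eq_abs,
        abs_of_nonneg (Real.sqrt_nonneg _), div_pow, Real.sq_sqrt hc.le]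
      ring
    simp_rw [h1]
    rw [integral_div]
  rw [Metric.tendsto_nhds]
  intro ε hε
  obtain ⟨m, hm⟩ := exists_pow_lt_of_lt_one (half_pos hε) hc₁lt
  have hg1 : Tendsto g (nhdsWithin z₀ Ω) (𝓝 1) := by
    have h1 : ContinuousWithinAt g (closure Ω) z₀ := hgcont z₀ hz₀cl
    have h2 := h1.tendsto
    rw [hgpeak] at h2
    exact h2.mono_left (nhdsWithin_mono _ subset_closure)
  have hgm : Tendsto (fun z => ‖g z‖ ^ m) (nhdsWithin z₀ Ω) (𝓝 1) := by
    have h1 : Tendsto (fun z => ‖g z‖) (nhdsWithin z₀ Ω) (𝓝 1) := by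
      have := (continuous_norm.tendsto 1).comp hg1
      simpa [Function.comp_def] using this
    have := h1.pow m
    simpa using this
  have hev1 : ∀ᶠ z in nhdsWithin z₀ Ω, 1 - ε / 2 < ‖g z‖ ^ m :=
    hgm.eventually (eventually_gt_nhds (by linarith))
  filter_upwards [hev1, self_mem_nhdsWithin] with z hz1 hzΩ
  rw [Real.dist_eq, sub_zero]
  have hc : (0:ℝ) < (K z z).re := hKpos z hzΩ
  set h : (Fin n → ℂ) → ℝ := fun w => ‖K w z‖ ^ 2 * μ w with hh_def
  have hInt : IntegrableOn h Ω volume := (hK.1 z hzΩ).2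
  have hh0 : ∀ w ∈ Ω, 0 ≤ h w := fun w hw =>
    mul_nonneg (by positivity) (hμ w hw)
  have hh0ae : 0 ≤ᵐ[volume.restrict Ω] h := by
    filter_upwards [ae_restrict_mem hmeasΩ] with w hw using hh0 w hw
  -- nonnegativity of the integral over Ω \ U
  have hnn : 0 ≤ ∫ w in Ω \ U, h w := by
    apply integral_nonneg_of_ae
    exact hh0ae.filter_mono (ae_mono (Measure.restrict_mono Set.diff_subset le_rfl))
  -- compare with Ω \ V
  have hle1 : ∫ w in Ω \ U, h w ≤ ∫ w in Ω \ V, h w := by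
    apply setIntegral_mono_set (hInt.mono_set Set.diff_subset)
    · filter_upwards [ae_restrict_mem (hmeasΩ.diff hVopen.measurableSet)] with w hw
        using hh0 w hw.1
    · exact HasSubset.Subset.eventuallyLE (Set.diff_subset_diff_right hVU)
  have hkey := key_estimate hΩopen hμ hK hghol
    (fun w hw => hgbd w (subset_closure hw)) hVopen hc₁0 hc₁ m hzΩ
  have hbound : (∫ w in Ω \ U, h w) / (K z z).re
      ≤ 1 - ‖g z‖ ^ m + c₁ ^ m := by
    rw [div_le_iff₀ hc]
    calc ∫ w in Ω \ U, h w ≤ ∫ w in Ω \ V, h w := hle1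
      _ ≤ (1 - ‖g z‖ ^ m + c₁ ^ m) * (K z z).re := hkey
  rw [hFeq z hzΩ, abs_of_nonneg (div_nonneg hnn hc.le)]
  calc (∫ w in Ω \ U, h w) / (K z z).re
      ≤ 1 - ‖g z‖ ^ m + c₁ ^ m := hbound
    _ < ε / 2 + ε / 2 := by linarith
    _ = ε := by ring
end

section
/- Let Ω ⊂ ℂⁿ be a bounded domain, r ≥ 0, φ ∈ C(Ω̄), and z₀ ∈ bΩ a point admitting a holomorphic peak function. Then the weighted Berezin transform of the Toeplitz operator T^r_φ satisfies lim_{z→z₀} B_r T^r_φ(z) = φ(z₀), where B_r T(z) = ⟨T k_z^r, k_z^r⟩_r. -/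
open MeasureTheory Filter Topology

private lemma my_ofReal_int {X : Type*} [MeasurableSpace X] (f : X → ℝ) (μ : MeasureTheory.Measure X) :
    ∫ x, ((f x : ℝ) : ℂ) ∂μ = ((∫ x, f x ∂μ : ℝ) : ℂ) := integral_ofReal

private lemma conj_mul_self_eq (a : ℂ) : (starRingEnd ℂ) a * a = ((‖a‖ ^ 2 : ℝ) : ℂ) := by
  rw [mul_comm, Complex.mul_conj]
  norm_cast
  simp [Complex.normSq_eq_norm_sq]

/-- boundedly continuous times integrable nonneg real, as complex product, integrable. -/
private lemma intOn_mul_ofReal {α : Type*} [MeasureSpace α] {s : Set α}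
    (hs : MeasurableSet s) {f : α → ℂ} {h : α → ℝ} {C : ℝ}
    (hf : AEStronglyMeasurable f (volume.restrict s))
    (hC : ∀ w ∈ s, ‖f w‖ ≤ C)
    (hh : IntegrableOn h s) (hnn : ∀ w ∈ s, 0 ≤ h w) :
    IntegrableOn (fun w => f w * (h w : ℂ)) s := by
  apply Integrable.mono' (hh.const_mul C)
  · exact hf.mul (Complex.continuous_ofReal.comp_aestronglyMeasurable hh.1)
  · refine (ae_restrict_iff' hs).2 (Filter.Eventually.of_forall fun w hw => ?_)
    have h1 : ‖f w * (h w : ℂ)‖ = ‖f w‖ * h w := by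
      rw [norm_mul, Complex.norm_real, Real.norm_of_nonneg (hnn w hw)]
    rw [h1]
    exact mul_le_mul_of_nonneg_right (hC w hw) (hnn w hw)

/-- If `z₀ ∈ bΩ` admits a holomorphic peak function and `φ ∈ C(Ω̄)`, then the weighted
Berezin transform of the Toeplitz operator `T^r_φ`, namely
`B_r T^r_φ(z) = ⟨T^r_φ k_z^r, k_z^r⟩ = ∫_Ω φ(w)|k_z^r(w)|²(-ρ(w))^r dV(w)`, tends to
`φ(z₀)` as `z → z₀`. -/
theorem berezin_toeplitz_tendsto_peak {n : ℕ}
    (Ω : Set (Fin n → ℂ)) (hΩopen : IsOpen Ω) (hΩbdd : Bornology.IsBounded Ω)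
    (ρ : (Fin n → ℂ) → ℝ) (hdef : Ω = {z | ρ z < 0}) (r : ℝ) (hr : 0 ≤ r)
    (K : (Fin n → ℂ) → (Fin n → ℂ) → ℂ)
    (hK : IsBergmanKernel Ω (fun w => (-ρ w) ^ r) K)
    (hKpos : ∀ z ∈ Ω, 0 < (K z z).re)
    (z₀ : Fin n → ℂ) (hz₀ : z₀ ∈ frontier Ω)
    (g : (Fin n → ℂ) → ℂ) (hghol : DifferentiableOn ℂ g Ω)
    (hgcont : ContinuousOn g (closure Ω)) (hgpeak : g z₀ = 1)
    (hglt : ∀ w ∈ closure Ω, w ≠ z₀ → ‖g w‖ < 1)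
    (φ : (Fin n → ℂ) → ℂ) (hφ : ContinuousOn φ (closure Ω)) :
    Tendsto (fun z => ∫ w in Ω,
        φ w * ((‖K w z / (Real.sqrt ((K z z).re) : ℂ)‖ ^ 2 * (-ρ w) ^ r : ℝ) : ℂ))
      (nhdsWithin z₀ Ω) (𝓝 (φ z₀)) := by
  classical
  have hΩmeas : MeasurableSet Ω := hΩopen.measurableSet
  set μw : (Fin n → ℂ) → ℝ := fun w => (-ρ w) ^ r with hμw
  have hμpos : ∀ w ∈ Ω, 0 < μw w := by
    intro w hw
    have : ρ w < 0 := by rw [hdef] at hw; exact hw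
    exact Real.rpow_pos_of_pos (by linarith) r
  have hz₀cl : z₀ ∈ closure Ω := frontier_subset_closure hz₀
  have hz₀notΩ : z₀ ∉ Ω := by
    rw [hΩopen.frontier_eq] at hz₀; exact hz₀.2
  have hgΩlt : ∀ w ∈ Ω, ‖g w‖ < 1 := by
    intro w hw
    have hne : w ≠ z₀ := fun he => hz₀notΩ (he ▸ hw)
    have := hglt w (subset_closure hw) hne
    exact this
  have hg1 : ∀ w ∈ closure Ω, ‖g w‖ ≤ 1 := by
    intro w hw
    by_cases hwe : w = z₀
    · rw [hwe, hgpeak]; simp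
    · exact le_of_lt (by exact hglt w hw hwe)
  -- the density
  set h : (Fin n → ℂ) → (Fin n → ℂ) → ℝ :=
    fun z w => ‖K w z‖ ^ 2 * μw w / (K z z).re with hh
  -- basic kernel facts
  have hInt1 : ∀ z ∈ Ω, IntegrableOn (fun w => ‖K w z‖ ^ 2 * μw w) Ω volume :=
    fun z hz => (hK.1 z hz).2
  have hKzz : ∀ z ∈ Ω, (K z z).re = ∫ w in Ω, ‖K w z‖ ^ 2 * μw w ∧
      K z z = (((K z z).re : ℝ) : ℂ) := by
    intro z hz
    have hrep := hK.2.2 (fun w => K w z) (hK.1 z hz) z hz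
    have hcongr : ∫ w in Ω, K z w * K w z * (μw w : ℂ)
        = ∫ w in Ω, ((‖K w z‖ ^ 2 * μw w : ℝ) : ℂ) := by
      refine setIntegral_congr_fun hΩmeas fun w hw => ?_
      rw [hK.2.1 z hz w hw, conj_mul_self_eq]
      push_cast
      ring
    rw [hcongr, my_ofReal_int] at hrep
    have hrep' : K z z = ((∫ w in Ω, ‖K w z‖ ^ 2 * μw w : ℝ) : ℂ) := hrep
    constructor
    · rw [hrep']; simp
    · rw [hrep']; simp
  have hIntH : ∀ z ∈ Ω, IntegrableOn (h z) Ω volume :=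
    fun z hz => (hInt1 z hz).div_const _
  have hHnn : ∀ z ∈ Ω, ∀ w ∈ Ω, 0 ≤ h z w := by
    intro z hz w hw
    apply div_nonneg (mul_nonneg (by positivity) (le_of_lt (hμpos w hw))) (le_of_lt (hKpos z hz))
  have hH1 : ∀ z ∈ Ω, ∫ w in Ω, h z w = 1 := by
    intro z hz
    have : (fun w => h z w) = fun w => (‖K w z‖ ^ 2 * μw w) / (K z z).re := rfl
    rw [this]
    rw [integral_div, ← (hKzz z hz).1, div_self (ne_of_gt (hKpos z hz))]
  have hHmeas : ∀ z ∈ Ω, AEStronglyMeasurable (h z) (volume.restrict Ω) :=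
    fun z hz => (hIntH z hz).1
  -- reproducing property for g against the density
  have hrepg : ∀ z ∈ Ω, ∫ w in Ω, g w * ((h z w : ℝ) : ℂ) = g z := by
    intro z hz
    have hmem : MemA2 Ω μw fun w => g w * K w z := by
      constructor
      · exact hghol.mul (hK.1 z hz).1
      · have heq : (fun w => ‖g w * K w z‖ ^ 2 * μw w)
            = fun w => ‖g w‖ ^ 2 * (‖K w z‖ ^ 2 * μw w) := by
          funext w; rw [norm_mul, mul_pow]; ring
        rw [heq]
        apply Integrable.mono' (hInt1 z hz)
        · exact ((((hgcont.mono subset_closure).norm.pow 2)).aestronglyMeasurable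
            hΩmeas).mul (hInt1 z hz).1
        · refine (ae_restrict_iff' hΩmeas).2 (Filter.Eventually.of_forall fun w hw => ?_)
          have h0 : 0 ≤ ‖K w z‖ ^ 2 * μw w :=
            mul_nonneg (by positivity) (le_of_lt (hμpos w hw))
          have h1 : ‖g w‖ ^ 2 ≤ 1 :=
            pow_le_one₀ (norm_nonneg _) (hg1 w (subset_closure hw))
          rw [Real.norm_of_nonneg (mul_nonneg (by positivity) h0)]
          nlinarith
    have hrep := hK.2.2 _ hmem z hz
    have hcongr : ∫ w in Ω, K z w * (g w * K w z) * (μw w : ℂ)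
        = ∫ w in Ω, g w * ((‖K w z‖ ^ 2 * μw w : ℝ) : ℂ) := by
      refine setIntegral_congr_fun hΩmeas fun w hw => ?_
      rw [hK.2.1 z hz w hw]
      have := conj_mul_self_eq (K w z)
      push_cast
      push_cast at this
      calc (starRingEnd ℂ) (K w z) * (g w * K w z) * (μw w : ℂ)
          = g w * ((starRingEnd ℂ) (K w z) * K w z) * (μw w : ℂ) := by ring
        _ = g w * (((‖K w z‖:ℂ)) ^ 2) * (μw w : ℂ) := by rw [this]
        _ = g w * ((‖K w z‖:ℂ) ^ 2 * (μw w : ℂ)) := by ring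
    rw [hcongr] at hrep
    have heq2 : (fun w => g w * ((h z w : ℝ) : ℂ))
        = fun w => (g w * ((‖K w z‖ ^ 2 * μw w : ℝ) : ℂ)) / (((K z z).re : ℝ) : ℂ) := by
      funext w
      rw [hh]
      push_cast
      ring
    have hKne : K z z ≠ 0 := fun hc => (hKpos z hz).ne' (by rw [hc]; simp)
    rw [heq2, integral_div, ← hrep, ← (hKzz z hz).2, mul_div_assoc, div_self hKne, mul_one]
  -- measurability of φ and g on Ω
  have hφmeasΩ : AEStronglyMeasurable φ (volume.restrict Ω) :=
    (hφ.mono subset_closure).aestronglyMeasurable hΩmeas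
  have hgmeasΩ : AEStronglyMeasurable g (volume.restrict Ω) :=
    (hgcont.mono subset_closure).aestronglyMeasurable hΩmeas
  -- rewrite the integrand in terms of the density h
  have hEq : ∀ z ∈ Ω, (fun w => φ w *
      ((‖K w z / (Real.sqrt ((K z z).re) : ℂ)‖ ^ 2 * (-ρ w) ^ r : ℝ) : ℂ))
      = fun w => φ w * ((h z w : ℝ) : ℂ) := by
    intro z hz
    funext w
    congr 1
    rw [Complex.ofReal_inj]
    rw [norm_div, Complex.norm_real, Real.norm_of_nonneg (Real.sqrt_nonneg _), div_pow,
      Real.sq_sqrt (le_of_lt (hKpos z hz))]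
    rw [hh]
    rw [div_mul_eq_mul_div]
  have hEq' : (fun z => ∫ w in Ω, φ w * ((h z w : ℝ) : ℂ)) =ᶠ[nhdsWithin z₀ Ω]
      (fun z => ∫ w in Ω, φ w *
        ((‖K w z / (Real.sqrt ((K z z).re) : ℂ)‖ ^ 2 * (-ρ w) ^ r : ℝ) : ℂ)) := by
    refine Filter.eventuallyEq_of_mem self_mem_nhdsWithin fun z hz => ?_
    rw [hEq z hz]
  refine Tendsto.congr' hEq' ?_
  rw [Metric.tendsto_nhdsWithin_nhds]
  intro ε hε
  have hcl : IsCompact (closure Ω) :=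
    Metric.isCompact_of_isClosed_isBounded isClosed_closure hΩbdd.closure
  obtain ⟨Cφ, hCφ⟩ := hcl.exists_bound_of_continuousOn hφ
  obtain ⟨M0, hM0⟩ := hcl.exists_bound_of_continuousOn (hφ.sub (continuousOn_const (c := φ z₀)))
  set M := max M0 1 with hM
  have hM1 : (0:ℝ) < M := lt_of_lt_of_le one_pos (le_max_right _ _)
  have hMb : ∀ w ∈ closure Ω, ‖φ w - φ z₀‖ ≤ M := fun w hw =>
    le_trans (hM0 w hw) (le_max_left _ _)
  obtain ⟨δ₁, hδ₁, hφδ⟩ := Metric.continuousWithinAt_iff.1 (hφ z₀ hz₀cl) (ε/4) (by positivity)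
  set S := closure Ω \ Metric.ball z₀ δ₁ with hS
  obtain ⟨c, hc0, hc1, hcb⟩ : ∃ c, 0 ≤ c ∧ c < 1 ∧ ∀ w ∈ S, ‖g w‖ ≤ c := by
    rcases S.eq_empty_or_nonempty with hSe | hSne
    · exact ⟨0, le_refl _, one_pos, fun w hw => by
        rw [hSe] at hw; exact absurd hw (Set.notMem_empty w)⟩
    · obtain ⟨x, hxS, hxmax⟩ := (hcl.diff Metric.isOpen_ball).exists_isMaxOn hSne
        ((hgcont.mono Set.diff_subset).norm)
      refine ⟨‖g x‖, norm_nonneg _, ?_, fun w hw => hxmax hw⟩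
      have hxne : x ≠ z₀ := fun he => hxS.2 (he ▸ Metric.mem_ball_self hδ₁)
      exact hglt x hxS.1 hxne
  set D := M / (1 - c) with hD
  have hDpos : 0 < D := div_pos hM1 (by linarith)
  obtain ⟨δ₂, hδ₂, hgδ⟩ := Metric.continuousWithinAt_iff.1
    ((hgcont z₀ hz₀cl).mono subset_closure) (ε/(4*D)) (by positivity)
  refine ⟨δ₂, hδ₂, ?_⟩
  intro z hzΩ hzd
  have hIH := hIntH z hzΩ
  have hnn := hHnn z hzΩ
  have h1 := hH1 z hzΩ
  have hg_z := hrepg z hzΩ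
  have hIgh : IntegrableOn (fun w => g w * ((h z w : ℝ) : ℂ)) Ω volume :=
    intOn_mul_ofReal hΩmeas hgmeasΩ (C := 1) (fun w hw => hg1 w (subset_closure hw)) hIH hnn
  have hIφh : IntegrableOn (fun w => φ w * ((h z w : ℝ) : ℂ)) Ω volume :=
    intOn_mul_ofReal hΩmeas hφmeasΩ (C := Cφ) (fun w hw => hCφ w (subset_closure hw)) hIH hnn
  have hIconst : IntegrableOn (fun w => φ z₀ * ((h z w : ℝ) : ℂ)) Ω volume :=
    intOn_mul_ofReal hΩmeas aestronglyMeasurable_const (C := ‖φ z₀‖)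
      (fun w _ => le_refl _) hIH hnn
  set p : (Fin n → ℂ) → ℝ := fun w => h z w - (g w).re * h z w with hp
  have hIre : IntegrableOn (fun w => (g w).re * h z w) Ω volume := by
    refine (hIgh.re).congr (Filter.Eventually.of_forall fun w => ?_)
    simp [Complex.mul_re]
  have hIp : IntegrableOn p Ω volume := hIH.sub hIre
  have hIp_val : ∫ w in Ω, p w = 1 - (g z).re := by
    rw [hp]
    rw [integral_sub hIH hIre, h1]
    congr 1
    have h2 := integral_re (𝕜 := ℂ) hIgh
    simp only [RCLike.re_to_complex] at h2
    have h3 : ∫ w in Ω, (g w).re * h z w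
        = ∫ w in Ω, (g w * ((h z w : ℝ) : ℂ)).re :=
      setIntegral_congr_fun hΩmeas fun w hw => by simp [Complex.mul_re]
    rw [h3, h2, hg_z]
  have hpnn : ∀ w ∈ Ω, 0 ≤ p w := by
    intro w hw
    have h2 : (g w).re ≤ 1 := by
      have h3 : (g w).re ≤ ‖g w‖ := by
        exact Complex.re_le_norm _
      linarith [hgΩlt w hw]
    have h4 := hnn w hw
    show 0 ≤ h z w - (g w).re * h z w
    nlinarith
  have hIG : IntegrableOn (fun w => ε/4 * h z w + D * p w) Ω volume :=
    (hIH.const_mul _).add (hIp.const_mul _)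
  have hGval : ∫ w in Ω, (ε/4 * h z w + D * p w) = ε/4 + D * (1 - (g z).re) := by
    rw [integral_add (hIH.const_mul _) (hIp.const_mul _), integral_const_mul,
      integral_const_mul, h1, hIp_val, mul_one]
  have hconst : ∫ w in Ω, φ z₀ * ((h z w : ℝ) : ℂ) = φ z₀ := by
    rw [integral_const_mul, my_ofReal_int, h1]
    simp
  rw [dist_eq_norm]
  have hsub : (∫ w in Ω, φ w * ((h z w : ℝ) : ℂ)) - φ z₀
      = ∫ w in Ω, (φ w - φ z₀) * ((h z w : ℝ) : ℂ) := by
    have e1 : (fun w => (φ w - φ z₀) * ((h z w : ℝ) : ℂ))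
        = fun w => φ w * ((h z w : ℝ) : ℂ) - φ z₀ * ((h z w : ℝ) : ℂ) :=
      funext fun w => by ring
    rw [e1, integral_sub hIφh hIconst, hconst]
  rw [hsub]
  have hbound : ‖∫ w in Ω, (φ w - φ z₀) * ((h z w : ℝ) : ℂ)‖
      ≤ ∫ w in Ω, (ε/4 * h z w + D * p w) := by
    apply norm_integral_le_of_norm_le hIG
    refine (ae_restrict_iff' hΩmeas).2 (Filter.Eventually.of_forall fun w hw => ?_)
    have hnorm : ‖(φ w - φ z₀) * ((h z w : ℝ) : ℂ)‖ = ‖φ w - φ z₀‖ * h z w := by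
      rw [norm_mul, Complex.norm_real, Real.norm_of_nonneg (hnn w hw)]
    rw [hnorm]
    have hpw := hpnn w hw
    have hhw := hnn w hw
    by_cases hwb : w ∈ Metric.ball z₀ δ₁
    · have hd : dist (φ w) (φ z₀) < ε/4 := hφδ (subset_closure hw) (Metric.mem_ball.1 hwb)
      rw [dist_eq_norm] at hd
      calc ‖φ w - φ z₀‖ * h z w ≤ ε/4 * h z w :=
            mul_le_mul_of_nonneg_right (le_of_lt hd) hhw
        _ ≤ ε/4 * h z w + D * p w := le_add_of_nonneg_right (mul_nonneg hDpos.le hpw)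
    · have hwS : w ∈ S := ⟨subset_closure hw, hwb⟩
      have hgw : ‖g w‖ ≤ c := hcb w hwS
      have hre : (g w).re ≤ c := by
        have h3 : (g w).re ≤ ‖g w‖ := by
          exact Complex.re_le_norm _
        linarith
      have hφw : ‖φ w - φ z₀‖ ≤ M := hMb w (subset_closure hw)
      have hMD : M = D * (1 - c) := by
        rw [hD, div_mul_cancel₀ _ (show (1:ℝ) - c ≠ 0 by linarith)]
      have hkey : ‖φ w - φ z₀‖ * h z w ≤ D * p w := by
        have hp_eq : p w = (1 - (g w).re) * h z w := by rw [hp]; ring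
        calc ‖φ w - φ z₀‖ * h z w ≤ M * h z w := mul_le_mul_of_nonneg_right hφw hhw
          _ = D * ((1 - c) * h z w) := by rw [hMD]; ring
          _ ≤ D * ((1 - (g w).re) * h z w) := by
              apply mul_le_mul_of_nonneg_left _ (le_of_lt hDpos)
              exact mul_le_mul_of_nonneg_right (by linarith) hhw
          _ = D * p w := by rw [hp_eq]
      calc ‖φ w - φ z₀‖ * h z w ≤ D * p w := hkey
        _ ≤ ε/4 * h z w + D * p w :=
            le_add_of_nonneg_left (mul_nonneg (by positivity) hhw)
  have hlast : D * (1 - (g z).re) < ε/4 := by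
    have hd := hgδ hzΩ hzd
    rw [hgpeak] at hd
    have h2 : 1 - (g z).re ≤ dist (g z) 1 := by
      rw [dist_eq_norm]
      calc 1 - (g z).re = (1 - g z).re := by simp
        _ ≤ ‖1 - g z‖ := Complex.re_le_norm _
        _ = ‖g z - 1‖ := by rw [norm_sub_rev]
    calc D * (1 - (g z).re) ≤ D * dist (g z) 1 :=
          mul_le_mul_of_nonneg_left h2 (le_of_lt hDpos)
      _ < D * (ε/(4*D)) := mul_lt_mul_of_pos_left hd hDpos
      _ = ε/4 := by field_simp
  have hfinal := hbound.trans (le_of_eq hGval)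
  calc ‖∫ w in Ω, (φ w - φ z₀) * ((h z w : ℝ) : ℂ)‖ ≤ ε/4 + D * (1 - (g z).re) := hfinal
    _ < ε := by linarith
end

section
/- Let Ω ⊂ ℂⁿ be a domain and μ₁, μ₂ admissible weights that are comparable (c⁻¹μ₁ ≤ μ₂ ≤ cμ₁ on Ω for some c > 1). Then the Bergman kernels on the diagonal are comparable: D⁻¹ K_{μ₁}(z,z) ≤ K_{μ₂}(z,z) ≤ D K_{μ₁}(z,z) with D = c², and for z₀ ∈ bΩ, the normalized kernel k_z^{μ₁} → 0 weakly in A²(Ω,dμ₁) as z → z₀ if and only if k_z^{μ₂} → 0 weakly in A²(Ω,dμ₂) as z → z₀. -/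
open MeasureTheory Filter Topology

variable {n : ℕ}

/-- A² membership transfers between dominated weights. -/
lemma memA2_mono {Ω : Set (Fin n → ℂ)} (hΩ : IsOpen Ω) {μ ν : (Fin n → ℂ) → ℝ}
    (hν : ContinuousOn ν Ω) (hνpos : ∀ z ∈ Ω, 0 ≤ ν z)
    {c : ℝ} (hle : ∀ z ∈ Ω, ν z ≤ c * μ z)
    {f : (Fin n → ℂ) → ℂ} (hf : MemA2 Ω μ f) : MemA2 Ω ν f := by
  refine ⟨hf.1, ?_⟩
  have hfm : AEStronglyMeasurable (fun z => ‖f z‖ ^ 2 * ν z) (volume.restrict Ω) :=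
    (((hf.1.continuousOn.norm.pow 2)).mul hν).aestronglyMeasurable hΩ.measurableSet
  refine Integrable.mono' (hf.2.const_mul c) hfm ?_
  filter_upwards [ae_restrict_mem hΩ.measurableSet] with z hz
  have h1 : 0 ≤ ‖f z‖ ^ 2 * ν z := mul_nonneg (by positivity) (hνpos z hz)
  rw [Real.norm_of_nonneg h1]
  calc ‖f z‖ ^ 2 * ν z ≤ ‖f z‖ ^ 2 * (c * μ z) := by
        exact mul_le_mul_of_nonneg_left (hle z hz) (by positivity)
    _ = c * (‖f z‖ ^ 2 * μ z) := by ring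

/-- Diagonal value of a Bergman kernel as an integral of the squared norm. -/
lemma diag_eq {Ω : Set (Fin n → ℂ)} (hΩ : IsOpen Ω) {μ : (Fin n → ℂ) → ℝ}
    {K : (Fin n → ℂ) → (Fin n → ℂ) → ℂ} (hK : IsBergmanKernel Ω μ K)
    {z : Fin n → ℂ} (hz : z ∈ Ω) :
    (K z z).re = ∫ w in Ω, ‖K w z‖ ^ 2 * μ w := by
  have h := hK.2.2 (fun w => K w z) (hK.1 z hz) z hz
  have h2 : ∫ w in Ω, K z w * K w z * (μ w : ℂ) =
      ∫ w in Ω, ((‖K w z‖ ^ 2 * μ w : ℝ) : ℂ) := by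
    refine setIntegral_congr_fun hΩ.measurableSet fun w hw => ?_
    rw [hK.2.1 z hz w hw]
    push_cast
    rw [mul_comm (starRingEnd ℂ (K w z)) (K w z), Complex.mul_conj']
  rw [h2] at h
  have h3 : (∫ w in Ω, ((‖K w z‖ ^ 2 * μ w : ℝ) : ℂ)) =
      ((∫ w in Ω, ‖K w z‖ ^ 2 * μ w : ℝ) : ℂ) := integral_ofReal
  simp only [h, h3, Complex.ofReal_re]

/-- One-sided diagonal comparison via Cauchy–Schwarz. -/
lemma diag_le {Ω : Set (Fin n → ℂ)} (hΩ : IsOpen Ω) {μ₁ μ₂ : (Fin n → ℂ) → ℝ}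
    (hμ₁cont : ContinuousOn μ₁ Ω) (hμ₁pos : ∀ z ∈ Ω, 0 ≤ μ₁ z)
    {c : ℝ} (hc : 0 < c) (hle : ∀ z ∈ Ω, μ₁ z ≤ c * μ₂ z)
    {K₁ K₂ : (Fin n → ℂ) → (Fin n → ℂ) → ℂ}
    (hK₁ : IsBergmanKernel Ω μ₁ K₁) (hK₂ : IsBergmanKernel Ω μ₂ K₂)
    {z : Fin n → ℂ} (hz : z ∈ Ω) (h2pos : 0 < (K₂ z z).re) :
    (K₂ z z).re ≤ c * (K₁ z z).re := by
  classical
  set a := (K₁ z z).re with ha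
  set b := (K₂ z z).re with hb
  have hg2 : MemA2 Ω μ₂ fun w => K₂ w z := hK₂.1 z hz
  have hg1 : MemA2 Ω μ₁ fun w => K₂ w z := memA2_mono hΩ hμ₁cont hμ₁pos hle hg2
  have hrep : K₂ z z = ∫ w in Ω, K₁ z w * K₂ w z * (μ₁ w : ℂ) := hK₁.2.2 _ hg1 z hz
  -- continuity facts
  have CK1 : ContinuousOn (fun w => K₁ w z) Ω := (hK₁.1 z hz).1.continuousOn
  have CK2 : ContinuousOn (fun w => K₂ w z) Ω := hg2.1.continuousOn
  have CK1row : ContinuousOn (fun w => K₁ z w) Ω := by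
    refine ((Complex.continuous_conj.comp_continuousOn CK1)).congr fun w hw => ?_
    exact hK₁.2.1 z hz w hw
  have hsq : ContinuousOn (fun w => ((Real.sqrt (μ₁ w) : ℝ) : ℂ)) Ω :=
    Complex.continuous_ofReal.comp_continuousOn
      (Real.continuous_sqrt.comp_continuousOn hμ₁cont)
  set F : (Fin n → ℂ) → ℂ := fun w => K₁ z w * ((Real.sqrt (μ₁ w) : ℝ) : ℂ) with hF
  set G : (Fin n → ℂ) → ℂ := fun w => K₂ w z * ((Real.sqrt (μ₁ w) : ℝ) : ℂ) with hG
  have hFm : AEStronglyMeasurable F (volume.restrict Ω) :=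
    (CK1row.mul hsq).aestronglyMeasurable hΩ.measurableSet
  have hGm : AEStronglyMeasurable G (volume.restrict Ω) :=
    (CK2.mul hsq).aestronglyMeasurable hΩ.measurableSet
  have hnormF : ∀ w ∈ Ω, ‖F w‖ ^ 2 = ‖K₁ w z‖ ^ 2 * μ₁ w := by
    intro w hw
    simp only [hF, norm_mul, Complex.norm_real, Real.norm_eq_abs,
      abs_of_nonneg (Real.sqrt_nonneg _), hK₁.2.1 z hz w hw, RingHomIsometric.norm_map]
    rw [mul_pow, Real.sq_sqrt (hμ₁pos w hw)]
  have hnormG : ∀ w ∈ Ω, ‖G w‖ ^ 2 = ‖K₂ w z‖ ^ 2 * μ₁ w := by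
    intro w hw
    simp only [hG, norm_mul, Complex.norm_real, Real.norm_eq_abs,
      abs_of_nonneg (Real.sqrt_nonneg _)]
    rw [mul_pow, Real.sq_sqrt (hμ₁pos w hw)]
  have hF2int : Integrable (fun w => ‖F w‖ ^ 2) (volume.restrict Ω) := by
    refine (hK₁.1 z hz).2.congr ?_
    filter_upwards [ae_restrict_mem hΩ.measurableSet] with w hw
    exact (hnormF w hw).symm
  have hG2int : Integrable (fun w => ‖G w‖ ^ 2) (volume.restrict Ω) := by
    refine hg1.2.congr ?_
    filter_upwards [ae_restrict_mem hΩ.measurableSet] with w hw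
    exact (hnormG w hw).symm
  have hF2 : MemLp F (ENNReal.ofReal 2) (volume.restrict Ω) := by
    rw [show ENNReal.ofReal 2 = 2 by norm_num]
    exact (memLp_two_iff_integrable_sq_norm hFm).2 hF2int
  have hG2 : MemLp G (ENNReal.ofReal 2) (volume.restrict Ω) := by
    rw [show ENNReal.ofReal 2 = 2 by norm_num]
    exact (memLp_two_iff_integrable_sq_norm hGm).2 hG2int
  have hpq : (2 : ℝ).HolderConjugate 2 := ⟨by norm_num, by norm_num, by norm_num⟩
  have CS := integral_mul_norm_le_Lp_mul_Lq (μ := volume.restrict Ω) hpq hF2 hG2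
  simp only [Real.rpow_two, ← Real.sqrt_eq_rpow] at CS
  -- identify the integrals
  have eqF : (∫ w in Ω, ‖F w‖ ^ 2) = a := by
    rw [ha, diag_eq hΩ hK₁ hz]
    refine setIntegral_congr_fun hΩ.measurableSet fun w hw => hnormF w hw
  have eqG : (∫ w in Ω, ‖G w‖ ^ 2) = ∫ w in Ω, ‖K₂ w z‖ ^ 2 * μ₁ w :=
    setIntegral_congr_fun hΩ.measurableSet fun w hw => hnormG w hw
  have hGb : (∫ w in Ω, ‖G w‖ ^ 2) ≤ c * b := by
    rw [eqG, hb, diag_eq hΩ hK₂ hz]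
    calc (∫ w in Ω, ‖K₂ w z‖ ^ 2 * μ₁ w) ≤ ∫ w in Ω, c * (‖K₂ w z‖ ^ 2 * μ₂ w) := by
          refine integral_mono_ae hg1.2 (hg2.2.const_mul c) ?_
          filter_upwards [ae_restrict_mem hΩ.measurableSet] with w hw
          calc ‖K₂ w z‖ ^ 2 * μ₁ w ≤ ‖K₂ w z‖ ^ 2 * (c * μ₂ w) :=
                mul_le_mul_of_nonneg_left (hle w hw) (by positivity)
            _ = c * (‖K₂ w z‖ ^ 2 * μ₂ w) := by ring
      _ = c * ∫ w in Ω, ‖K₂ w z‖ ^ 2 * μ₂ w := integral_const_mul c _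
  have hGnonneg : 0 ≤ ∫ w in Ω, ‖G w‖ ^ 2 := integral_nonneg fun w => sq_nonneg _
  -- main chain
  have hmain : b ≤ Real.sqrt a * Real.sqrt (c * b) := by
    calc b ≤ ‖K₂ z z‖ := Complex.re_le_norm _
      _ = ‖∫ w in Ω, K₁ z w * K₂ w z * (μ₁ w : ℂ)‖ := by rw [← hrep]
      _ ≤ ∫ w in Ω, ‖K₁ z w * K₂ w z * (μ₁ w : ℂ)‖ := norm_integral_le_integral_norm _
      _ = ∫ w in Ω, ‖F w‖ * ‖G w‖ := by
          refine setIntegral_congr_fun hΩ.measurableSet fun w hw => ?_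
          have hs := Real.mul_self_sqrt (hμ₁pos w hw)
          calc ‖K₁ z w * K₂ w z * ((μ₁ w : ℝ) : ℂ)‖ = ‖K₁ z w‖ * ‖K₂ w z‖ * μ₁ w := by
                simp [norm_mul, Complex.norm_real, abs_of_nonneg (hμ₁pos w hw)]
            _ = ‖F w‖ * ‖G w‖ := by
                rw [← hs]
                simp only [hF, hG, norm_mul, Complex.norm_real, Real.norm_eq_abs,
                  abs_of_nonneg (Real.sqrt_nonneg _)]
                ring
      _ ≤ Real.sqrt (∫ w in Ω, ‖F w‖ ^ 2) * Real.sqrt (∫ w in Ω, ‖G w‖ ^ 2) := CS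
      _ ≤ Real.sqrt a * Real.sqrt (c * b) := by
          rw [eqF]
          exact mul_le_mul_of_nonneg_left (Real.sqrt_le_sqrt hGb) (Real.sqrt_nonneg _)
  have hanonneg : 0 ≤ a := by
    by_contra h
    push_neg at h
    rw [Real.sqrt_eq_zero_of_nonpos h.le, zero_mul] at hmain
    linarith
  have hsq1 : Real.sqrt a * Real.sqrt a = a := Real.mul_self_sqrt hanonneg
  have hsq2 : Real.sqrt (c * b) * Real.sqrt (c * b) = c * b :=
    Real.mul_self_sqrt (by positivity)
  nlinarith [Real.sqrt_nonneg a, Real.sqrt_nonneg (c * b), sq_nonneg (Real.sqrt a * Real.sqrt (c*b) - b)]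

/-- The weak pairing with the (unnormalized) kernel is just evaluation. -/
lemma pairing_eq {Ω : Set (Fin n → ℂ)} (hΩ : IsOpen Ω) {μ : (Fin n → ℂ) → ℝ}
    {K : (Fin n → ℂ) → (Fin n → ℂ) → ℂ} (hK : IsBergmanKernel Ω μ K)
    {f : (Fin n → ℂ) → ℂ} (hf : MemA2 Ω μ f) {z : Fin n → ℂ} (hz : z ∈ Ω) :
    (∫ w in Ω, f w * starRingEnd ℂ (K w z) * (μ w : ℂ)) = f z := by
  have h : (∫ w in Ω, f w * starRingEnd ℂ (K w z) * (μ w : ℂ)) =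
      ∫ w in Ω, K z w * f w * (μ w : ℂ) := by
    refine setIntegral_congr_fun hΩ.measurableSet fun w hw => ?_
    rw [← hK.2.1 z hz w hw]
    ring
  rw [h, ← hK.2.2 f hf z hz]

/-- Transfer of normalized weak convergence between comparable normalizations. -/
lemma tendsto_cross {α : Type*} {f : α → ℂ} {l : Filter α} {Ω : Set α} (hΩl : Ω ∈ l)
    {A B : α → ℝ} {c : ℝ} (hc : 0 < c) (hA : ∀ z ∈ Ω, 0 < A z)
    (hAB : ∀ z ∈ Ω, A z ≤ c ^ 2 * B z)
    (h : Tendsto (fun z => f z / ((Real.sqrt (A z) : ℝ) : ℂ)) l (𝓝 0)) :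
    Tendsto (fun z => f z / ((Real.sqrt (B z) : ℝ) : ℂ)) l (𝓝 0) := by
  rw [tendsto_zero_iff_norm_tendsto_zero] at h ⊢
  have h3 : Tendsto (fun z => c * ‖f z / ((Real.sqrt (A z) : ℝ) : ℂ)‖) l (𝓝 0) := by
    have := h.const_mul c
    rwa [mul_zero] at this
  refine squeeze_zero' (Eventually.of_forall fun z => norm_nonneg _) ?_ h3
  filter_upwards [hΩl] with z hz
  have hAz : 0 < A z := hA z hz
  have hBz : 0 < B z := by nlinarith [hAB z hz]
  have hsB : 0 < Real.sqrt (B z) := Real.sqrt_pos.2 hBz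
  have hsA : 0 < Real.sqrt (A z) := Real.sqrt_pos.2 hAz
  have key : Real.sqrt (A z) ≤ c * Real.sqrt (B z) := by
    have : Real.sqrt (A z) ≤ Real.sqrt (c ^ 2 * B z) := Real.sqrt_le_sqrt (hAB z hz)
    rwa [Real.sqrt_mul (by positivity), Real.sqrt_sq hc.le] at this
  have h1 : ‖f z / ((Real.sqrt (B z) : ℝ) : ℂ)‖ = ‖f z‖ / Real.sqrt (B z) := by
    rw [norm_div, Complex.norm_real, Real.norm_eq_abs, abs_of_nonneg (Real.sqrt_nonneg _)]
  have h2 : ‖f z / ((Real.sqrt (A z) : ℝ) : ℂ)‖ = ‖f z‖ / Real.sqrt (A z) := by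
    rw [norm_div, Complex.norm_real, Real.norm_eq_abs, abs_of_nonneg (Real.sqrt_nonneg _)]
  rw [h1, h2, div_le_iff₀ hsB]
  calc ‖f z‖ = ‖f z‖ / Real.sqrt (A z) * Real.sqrt (A z) := by field_simp
    _ ≤ ‖f z‖ / Real.sqrt (A z) * (c * Real.sqrt (B z)) :=
        mul_le_mul_of_nonneg_left key (by positivity)
    _ = c * (‖f z‖ / Real.sqrt (A z)) * Real.sqrt (B z) := by ring

/-- For comparable admissible weights `c⁻¹μ₁ ≤ μ₂ ≤ cμ₁`, the Bergman kernels are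
comparable on the diagonal with constant `D = c²`, and the normalized kernel `k_z^{μ₁}`
tends to `0` weakly as `z → z₀ ∈ bΩ` iff `k_z^{μ₂}` does. -/
theorem comparable_weights_kernels {n : ℕ}
    (Ω : Set (Fin n → ℂ)) (hΩopen : IsOpen Ω)
    (μ₁ μ₂ : (Fin n → ℂ) → ℝ)
    (hμ₁cont : ContinuousOn μ₁ Ω) (hμ₂cont : ContinuousOn μ₂ Ω)
    (hμ₁pos : ∀ z ∈ Ω, 0 ≤ μ₁ z) (hμ₂pos : ∀ z ∈ Ω, 0 ≤ μ₂ z)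
    (c : ℝ) (hc : 1 < c)
    (hcomp : ∀ z ∈ Ω, c⁻¹ * μ₁ z ≤ μ₂ z ∧ μ₂ z ≤ c * μ₁ z)
    (K₁ K₂ : (Fin n → ℂ) → (Fin n → ℂ) → ℂ)
    (hK₁ : IsBergmanKernel Ω μ₁ K₁) (hK₂ : IsBergmanKernel Ω μ₂ K₂)
    (hK₁pos : ∀ z ∈ Ω, 0 < (K₁ z z).re) (hK₂pos : ∀ z ∈ Ω, 0 < (K₂ z z).re)
    (z₀ : Fin n → ℂ) (hz₀ : z₀ ∈ frontier Ω) :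
    (∀ z ∈ Ω, (c ^ 2)⁻¹ * (K₁ z z).re ≤ (K₂ z z).re ∧
        (K₂ z z).re ≤ c ^ 2 * (K₁ z z).re) ∧
    ((∀ f, MemA2 Ω μ₁ f → Tendsto (fun z =>
          (∫ w in Ω, f w * starRingEnd ℂ (K₁ w z) * (μ₁ w : ℂ)) /
            (Real.sqrt ((K₁ z z).re) : ℂ)) (nhdsWithin z₀ Ω) (𝓝 0)) ↔
      (∀ f, MemA2 Ω μ₂ f → Tendsto (fun z =>
          (∫ w in Ω, f w * starRingEnd ℂ (K₂ w z) * (μ₂ w : ℂ)) /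
            (Real.sqrt ((K₂ z z).re) : ℂ)) (nhdsWithin z₀ Ω) (𝓝 0))) := by
  have hc0 : (0 : ℝ) < c := lt_trans one_pos hc
  have hle21 : ∀ z ∈ Ω, μ₂ z ≤ c * μ₁ z := fun z hz => (hcomp z hz).2
  have hle12 : ∀ z ∈ Ω, μ₁ z ≤ c * μ₂ z := by
    intro z hz
    have h := (hcomp z hz).1
    calc μ₁ z = c * (c⁻¹ * μ₁ z) := by field_simp
      _ ≤ c * μ₂ z := mul_le_mul_of_nonneg_left h hc0.le
  have part1 : ∀ z ∈ Ω, (c ^ 2)⁻¹ * (K₁ z z).re ≤ (K₂ z z).re ∧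
      (K₂ z z).re ≤ c ^ 2 * (K₁ z z).re := by
    intro z hz
    have hA : (K₂ z z).re ≤ c * (K₁ z z).re :=
      diag_le hΩopen hμ₁cont hμ₁pos hc0 hle12 hK₁ hK₂ hz (hK₂pos z hz)
    have hB : (K₁ z z).re ≤ c * (K₂ z z).re :=
      diag_le hΩopen hμ₂cont hμ₂pos hc0 hle21 hK₂ hK₁ hz (hK₁pos z hz)
    have h1 := hK₁pos z hz
    have h2 := hK₂pos z hz
    constructor
    · rw [inv_mul_le_iff₀ (by positivity)]
      nlinarith
    · nlinarith
  refine ⟨part1, ?_⟩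
  have hΩmem : Ω ∈ nhdsWithin z₀ Ω := self_mem_nhdsWithin
  have conv1 : ∀ f, MemA2 Ω μ₁ f →
      (Tendsto (fun z => (∫ w in Ω, f w * starRingEnd ℂ (K₁ w z) * (μ₁ w : ℂ)) /
          (Real.sqrt ((K₁ z z).re) : ℂ)) (nhdsWithin z₀ Ω) (𝓝 0) ↔
        Tendsto (fun z => f z / ((Real.sqrt ((K₁ z z).re) : ℝ) : ℂ))
          (nhdsWithin z₀ Ω) (𝓝 0)) := by
    intro f hf
    refine tendsto_congr' ?_
    filter_upwards [hΩmem] with z hz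
    rw [pairing_eq hΩopen hK₁ hf hz]
  have conv2 : ∀ f, MemA2 Ω μ₂ f →
      (Tendsto (fun z => (∫ w in Ω, f w * starRingEnd ℂ (K₂ w z) * (μ₂ w : ℂ)) /
          (Real.sqrt ((K₂ z z).re) : ℂ)) (nhdsWithin z₀ Ω) (𝓝 0) ↔
        Tendsto (fun z => f z / ((Real.sqrt ((K₂ z z).re) : ℝ) : ℂ))
          (nhdsWithin z₀ Ω) (𝓝 0)) := by
    intro f hf
    refine tendsto_congr' ?_
    filter_upwards [hΩmem] with z hz
    rw [pairing_eq hΩopen hK₂ hf hz]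
  constructor
  · intro H f hf
    have hf1 : MemA2 Ω μ₁ f := memA2_mono hΩopen hμ₁cont hμ₁pos hle12 hf
    rw [conv2 f hf]
    refine tendsto_cross hΩmem hc0 (fun z hz => hK₁pos z hz) ?_
      ((conv1 f hf1).1 (H f hf1))
    intro z hz
    have h := (part1 z hz).1
    calc (K₁ z z).re = c ^ 2 * ((c ^ 2)⁻¹ * (K₁ z z).re) := by field_simp
      _ ≤ c ^ 2 * (K₂ z z).re := mul_le_mul_of_nonneg_left h (by positivity)
  · intro H f hf
    have hf2 : MemA2 Ω μ₂ f := memA2_mono hΩopen hμ₂cont hμ₂pos hle21 hf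
    rw [conv1 f hf]
    exact tendsto_cross hΩmem hc0 (fun z hz => hK₂pos z hz)
      (fun z hz => (part1 z hz).2) ((conv2 f hf2).1 (H f hf2))
end
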